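/- Let G_C be a graph with vertex set partitioned into k nonempty independent sets V_1, …, V_k, where V_α = {v_α^1, …, v_α^{n_α}} with n_α ≥ 1, and let (ℓ, G, H, ⟨≺_H, σ_H⟩) with ℓ = |E(G_C)| + 1 be the Stack Layout Extension instance constructed from (G_C, k, (V_1,…,V_k)) as described in the context. Then G admits an ℓ-page stack layout extending ⟨≺_H, σ_H⟩ if and only if G_C contains a colorful k-clique, i.e., a set C ⊆ V(G_C) of k pairwise adjacent vertices with |C ∩ V_α| = 1 for every α ∈ {1,…,k}. -/

import Mathlib

/-- Two edges `e` and `f` alternate (cross) with respect to the vertex position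
function `pos`: `e = {a, c}` and `f = {b, d}` with `pos a < pos b < pos c < pos d`. -/
def EdgesCross {V : Type*} (pos : V → ℕ) (e f : Sym2 V) : Prop :=
  ∃ a b c d : V, e = s(a, c) ∧ f = s(b, d) ∧ pos a < pos b ∧ pos b < pos c ∧ pos c < pos d

/-- The vertices of the W[1]-hardness construction: host vertices `u α j`
(`u 0 0`, `u α j` for `1 ≤ α ≤ k` and `0 ≤ j ≤ n α + 1`, and `u (k+1) 0`, `u (k+1) 1`)
and new vertices `x α` for `1 ≤ α ≤ k`.  All indices are 1-based as in the paper. -/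
inductive CliqueVtx : Type where
  | u (α : ℕ) (j : ℕ)
  | x (α : ℕ)
deriving DecidableEq

/-- Start position of the block of color `α` on the spine. -/
def cOffset (n : ℕ → ℕ) (α : ℕ) : ℕ :=
  ∑ β ∈ Finset.range α, (if β = 0 then 1 else n β + 2)

/-- The host spine order: `u 0 0 ≺ u 1 0 ≺ u 1 1 ≺ … ≺ u 1 (n 1 + 1) ≺ u 2 0 ≺ …
≺ u k (n k + 1) ≺ u (k+1) 0 ≺ u (k+1) 1`. -/
def cPos (n : ℕ → ℕ) : CliqueVtx → ℕ
  | .u α j => cOffset n α + j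
  | .x _ => 0

/-- The host vertices, i.e. `V(H)`. -/
def cHost (k : ℕ) (n : ℕ → ℕ) : CliqueVtx → Prop
  | .u α j => (α = 0 ∧ j = 0) ∨ (1 ≤ α ∧ α ≤ k ∧ j ≤ n α + 1) ∨ (α = k + 1 ∧ j ≤ 1)
  | .x _ => False

/-- `bV k n α` is the `≺_H`-predecessor of `u α 0`, for `1 ≤ α ≤ k + 1`. -/
def bV (n : ℕ → ℕ) (α : ℕ) : CliqueVtx :=
  if α = 1 then .u 0 0 else .u (α - 1) (n (α - 1) + 1)

/-- `aV k α` is the `≺_H`-successor of `u α 0`, for `1 ≤ α ≤ k + 1`. -/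
def aV (k : ℕ) (α : ℕ) : CliqueVtx :=
  if α = k + 1 then .u (k + 1) 1 else .u α 1

/-- The host page assignment (per-page-edge-set model).  The pages are one page `p_e`
per edge `e ∈ E(G_C)` together with the distinguished page `p_d`, encoded as
`Option {e // e ∈ EC}`, with `none` being `p_d` (so `ℓ = |E(G_C)| + 1`). -/
def cHostPage (k : ℕ) (n : ℕ → ℕ) (EC : Set (Sym2 (ℕ × ℕ))) :
    Option {e : Sym2 (ℕ × ℕ) // e ∈ EC} → Sym2 CliqueVtx → Prop
  | none, ep =>
      (∃ α, 1 ≤ α ∧ α ≤ k + 1 ∧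
        (ep = s(bV n α, CliqueVtx.u α 0) ∨ ep = s(CliqueVtx.u α 0, aV k α))) ∨
      (∃ α, 1 ≤ α ∧ α ≤ k ∧ ep = s(CliqueVtx.u α 0, CliqueVtx.u (α + 1) 0)) ∨
      ep = s(CliqueVtx.u 0 0, CliqueVtx.u (k + 1) 1)
  | some e, ep =>
      (∃ α, 1 ≤ α ∧ α ≤ k + 1 ∧ ep = s(bV n α, aV k α)) ∨
      (∃ α i β j, e.1 = s((α, i), (β, j)) ∧ α < β ∧
        ((∃ γ, 1 ≤ γ ∧ γ ≤ k ∧ γ ≠ α ∧ γ ≠ β ∧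
            ep = s(CliqueVtx.u γ 1, CliqueVtx.u γ (n γ + 1))) ∨
         (1 < i ∧ ep = s(CliqueVtx.u α 1, CliqueVtx.u α i)) ∨
         (i < n α ∧ ep = s(CliqueVtx.u α (i + 1), CliqueVtx.u α (n α + 1))) ∨
         (1 < j ∧ ep = s(CliqueVtx.u β 1, CliqueVtx.u β j)) ∨
         (j < n β ∧ ep = s(CliqueVtx.u β (j + 1), CliqueVtx.u β (n β + 1))) ∨
         ep = s(CliqueVtx.u α i, CliqueVtx.u β (j + 1)) ∨
         ep = s(CliqueVtx.u α (i + 1), CliqueVtx.u β j)))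

/-- The new edges of `G`: a clique on the new vertices `x 1, …, x k` together with the
fixation-gadget edges `x α – u α 0` and `x α – u (α+1) 0`. -/
def cNew (k : ℕ) : Set (Sym2 CliqueVtx) :=
  {ep | (∃ α β, 1 ≤ α ∧ α < β ∧ β ≤ k ∧ ep = s(CliqueVtx.x α, CliqueVtx.x β)) ∨
        (∃ α, 1 ≤ α ∧ α ≤ k ∧
          (ep = s(CliqueVtx.x α, CliqueVtx.u α 0) ∨
           ep = s(CliqueVtx.x α, CliqueVtx.u (α + 1) 0)))}

section Stmt6Aux
open CliqueVtx

variable {n : ℕ → ℕ}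

lemma cross_iff {V : Type*} (pos : V → ℕ) (a c b d : V) :
    EdgesCross pos s(a,c) s(b,d) ↔
      min (pos a) (pos c) < min (pos b) (pos d) ∧
      min (pos b) (pos d) < max (pos a) (pos c) ∧
      max (pos a) (pos c) < max (pos b) (pos d) := by
  constructor
  · rintro ⟨w,x,y,z,he,hf,h1,h2,h3⟩
    rw [Sym2.eq_iff] at he hf
    rcases he with ⟨rfl,rfl⟩|⟨rfl,rfl⟩ <;> rcases hf with ⟨rfl,rfl⟩|⟨rfl,rfl⟩ <;>
      refine ⟨by omega, by omega, by omega⟩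
  · rintro ⟨h1,h2,h3⟩
    by_cases hac : pos a ≤ pos c <;> by_cases hbd : pos b ≤ pos d
    · exact ⟨a,b,c,d, rfl, rfl, by omega, by omega, by omega⟩
    · exact ⟨a,d,c,b, rfl, Sym2.eq_swap, by omega, by omega, by omega⟩
    · exact ⟨c,b,a,d, Sym2.eq_swap, rfl, by omega, by omega, by omega⟩
    · exact ⟨c,d,a,b, Sym2.eq_swap, Sym2.eq_swap, by omega, by omega, by omega⟩

lemma noncross_cert {V : Type*} (pos : V → ℕ) (v1 v2 v3 v4 : V)
    (h : ¬ (min (pos v1) (pos v2) < min (pos v3) (pos v4) ∧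
            min (pos v3) (pos v4) < max (pos v1) (pos v2) ∧
            max (pos v1) (pos v2) < max (pos v3) (pos v4))) :
    ¬ EdgesCross pos s(v1,v2) s(v3,v4) := by
  rw [cross_iff]; exact h

lemma cOffset_zero (n : ℕ → ℕ) : cOffset n 0 = 0 := rfl

lemma cOffset_one (n : ℕ → ℕ) : cOffset n 1 = 1 := by simp [cOffset]

lemma cOffset_succ (n : ℕ → ℕ) {α : ℕ} (h : 1 ≤ α) :
    cOffset n (α+1) = cOffset n α + n α + 2 := by
  unfold cOffset
  rw [Finset.sum_range_succ, if_neg (by omega)]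
  ring

lemma cOffset_mono (n : ℕ → ℕ) {α β : ℕ} (h : α ≤ β) : cOffset n α ≤ cOffset n β :=
  Finset.sum_le_sum_of_subset (Finset.range_subset_range.2 h)

lemma keyS (n : ℕ → ℕ) {α β : ℕ} (h : α < β) : cOffset n α < cOffset n β := by
  have h2 : α + 1 ≤ β := h
  have := cOffset_mono n h2
  rcases Nat.eq_zero_or_pos α with rfl | hα
  · have := cOffset_one n
    have := cOffset_mono n (show 1 ≤ β by omega)
    simp [cOffset_zero]; omega
  · have := cOffset_succ n hα
    omega

lemma keyG (n : ℕ → ℕ) {α β : ℕ} (h1 : 1 ≤ α) (h : α < β) :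
    cOffset n α + n α + 2 ≤ cOffset n β := by
  have := cOffset_succ n h1
  have := cOffset_mono n (show α + 1 ≤ β by omega)
  omega

lemma key1 (n : ℕ → ℕ) {β : ℕ} (h : 1 ≤ β) : 1 ≤ cOffset n β := by
  have := cOffset_one n
  have := cOffset_mono n h
  omega

/-- `aV` is uniformly `u α 1`. -/
lemma aV_eq (k α : ℕ) : aV k α = CliqueVtx.u α 1 := by
  unfold aV; split
  · rename_i h; rw [h]
  · rfl

end Stmt6Aux
section Stmt6Constr
open CliqueVtx

/-- positions for the backward construction -/
def posB (n c : ℕ → ℕ) : CliqueVtx → ℕ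
  | .u b o => 2 * (cOffset n b + o)
  | .x a => 2 * (cOffset n a + c a) + 1

open Classical in
/-- page assignment for the backward construction -/
noncomputable def sigB (k : ℕ) (EC : Set (Sym2 (ℕ × ℕ))) (c : ℕ → ℕ)
    (hc2 : ∀ α β, 1 ≤ α → α < β → β ≤ k → s((α, c α), (β, c β)) ∈ EC) :
    Sym2 CliqueVtx → Option {e : Sym2 (ℕ × ℕ) // e ∈ EC} := fun ep =>
  if h : ∃ a, ∃ b, 1 ≤ a ∧ a < b ∧ b ≤ k ∧ ep = s(CliqueVtx.x a, CliqueVtx.x b) then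
    some ⟨s((h.choose, c h.choose), (h.choose_spec.choose, c h.choose_spec.choose)),
      hc2 _ _ h.choose_spec.choose_spec.1 h.choose_spec.choose_spec.2.1
        h.choose_spec.choose_spec.2.2.1⟩
  else none

lemma sigB_spec {k : ℕ} {EC : Set (Sym2 (ℕ × ℕ))} {c : ℕ → ℕ}
    {hc2 : ∀ α β, 1 ≤ α → α < β → β ≤ k → s((α, c α), (β, c β)) ∈ EC}
    {ep : Sym2 CliqueVtx} {e0 : {e : Sym2 (ℕ × ℕ) // e ∈ EC}}
    (h : sigB k EC c hc2 ep = some e0) :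
    ∃ a b, 1 ≤ a ∧ a < b ∧ b ≤ k ∧ ep = s(CliqueVtx.x a, CliqueVtx.x b) ∧
      e0.1 = s((a, c a), (b, c b)) := by
  rw [sigB] at h
  split at h
  · rename_i hex
    obtain ⟨h1, h2, h3, h4⟩ := hex.choose_spec.choose_spec
    refine ⟨hex.choose, hex.choose_spec.choose, h1, h2, h3, h4, ?_⟩
    have h5 := Option.some_inj.1 h
    rw [← h5]
  · exact absurd h (by simp)

lemma sigB_xx_ne_none {k : ℕ} {EC : Set (Sym2 (ℕ × ℕ))} {c : ℕ → ℕ}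
    {hc2 : ∀ α β, 1 ≤ α → α < β → β ≤ k → s((α, c α), (β, c β)) ∈ EC}
    {α β : ℕ} (hα : 1 ≤ α) (hαβ : α < β) (hβk : β ≤ k) :
    sigB k EC c hc2 s(CliqueVtx.x α, CliqueVtx.x β) ≠ none := by
  rw [sigB, dif_pos ⟨α, β, hα, hαβ, hβk, rfl⟩]
  simp

lemma sigB_not {k : ℕ} {EC : Set (Sym2 (ℕ × ℕ))} {c : ℕ → ℕ}
    {hc2 : ∀ α β, 1 ≤ α → α < β → β ≤ k → s((α, c α), (β, c β)) ∈ EC}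
    {ep : Sym2 CliqueVtx}
    (h : ∀ a b, 1 ≤ a → a < b → b ≤ k → ep ≠ s(CliqueVtx.x a, CliqueVtx.x b)) :
    sigB k EC c hc2 ep = none := by
  rw [sigB, dif_neg]
  rintro ⟨a, b, h1, h2, h3, h4⟩
  exact h a b h1 h2 h3 h4

lemma bV_posB (n c : ℕ → ℕ) {μ : ℕ} (h : 1 ≤ μ) :
    posB n c (bV n μ) + 2 = 2 * cOffset n μ := by
  unfold bV
  split
  · rename_i h1; subst h1
    simp [posB, cOffset_one]
    rfl
  · rename_i h1
    have h2 : 1 ≤ μ - 1 := by omega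
    have h4 := cOffset_succ n h2
    have h3 : μ - 1 + 1 = μ := by omega
    rw [h3] at h4
    simp only [posB]
    omega

lemma decomp_unique {γ i δ j γ' i' δ' j' : ℕ}
    (h : (s(((γ:ℕ), (i:ℕ)), ((δ:ℕ), (j:ℕ))) : Sym2 (ℕ × ℕ)) = s((γ', i'), (δ', j')))
    (h1 : γ < δ) (h2 : γ' < δ') : γ = γ' ∧ i = i' ∧ δ = δ' ∧ j = j' := by
  rw [Sym2.eq_iff] at h
  rcases h with ⟨ha, hb⟩ | ⟨ha, hb⟩ <;>
    simp only [Prod.mk.injEq] at ha hb <;> omega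

end Stmt6Constr
section Stmt6Shape
open CliqueVtx

lemma pendant_none {k : ℕ} {EC : Set (Sym2 (ℕ × ℕ))} {c : ℕ → ℕ}
    {hc2 : ∀ α β, 1 ≤ α → α < β → β ≤ k → s((α, c α), (β, c β)) ∈ EC}
    (a b o : ℕ) :
    sigB k EC c hc2 s(CliqueVtx.x a, CliqueVtx.u b o) = none := by
  apply sigB_not
  intro a' b' _ _ _ hcon
  rw [Sym2.eq_iff] at hcon
  rcases hcon with ⟨_, h⟩ | ⟨_, h⟩ <;> exact CliqueVtx.noConfusion h

lemma shape_d {k : ℕ} {n : ℕ → ℕ} {EC : Set (Sym2 (ℕ × ℕ))} {c : ℕ → ℕ}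
    {hc2 : ∀ α β, 1 ≤ α → α < β → β ≤ k → s((α, c α), (β, c β)) ∈ EC}
    {e : Sym2 CliqueVtx}
    (he : cHostPage k n EC none e ∨ e ∈ cNew k ∧ sigB k EC c hc2 e = none) :
    (∃ μ, 1 ≤ μ ∧ μ ≤ k + 1 ∧ e = s(bV n μ, CliqueVtx.u μ 0)) ∨
    (∃ μ, 1 ≤ μ ∧ μ ≤ k + 1 ∧ e = s(CliqueVtx.u μ 0, CliqueVtx.u μ 1)) ∨
    (∃ μ, 1 ≤ μ ∧ μ ≤ k ∧ e = s(CliqueVtx.u μ 0, CliqueVtx.u (μ+1) 0)) ∨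
    e = s(CliqueVtx.u 0 0, CliqueVtx.u (k+1) 1) ∨
    (∃ μ, 1 ≤ μ ∧ μ ≤ k ∧ e = s(CliqueVtx.x μ, CliqueVtx.u μ 0)) ∨
    (∃ μ, 1 ≤ μ ∧ μ ≤ k ∧ e = s(CliqueVtx.x μ, CliqueVtx.u (μ+1) 0)) := by
  rcases he with h | ⟨hN, hσ⟩
  · simp only [cHostPage] at h
    rcases h with ⟨μ, h1, h2, h3 | h3⟩ | ⟨μ, h1, h2, h3⟩ | h3
    · exact Or.inl ⟨μ, h1, h2, h3⟩
    · refine Or.inr (Or.inl ⟨μ, h1, h2, ?_⟩); rw [h3, aV_eq]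
    · exact Or.inr (Or.inr (Or.inl ⟨μ, h1, h2, h3⟩))
    · exact Or.inr (Or.inr (Or.inr (Or.inl h3)))
  · simp only [cNew, Set.mem_setOf_eq] at hN
    rcases hN with ⟨a, b, h1, h2, h3, h4⟩ | ⟨a, h1, h2, h4 | h4⟩
    · rw [h4] at hσ; exact absurd hσ (sigB_xx_ne_none h1 h2 h3)
    · exact Or.inr (Or.inr (Or.inr (Or.inr (Or.inl ⟨a, h1, h2, h4⟩))))
    · exact Or.inr (Or.inr (Or.inr (Or.inr (Or.inr ⟨a, h1, h2, h4⟩))))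

lemma shape_s {k : ℕ} {n : ℕ → ℕ} {EC : Set (Sym2 (ℕ × ℕ))} {c : ℕ → ℕ}
    {hc2 : ∀ α β, 1 ≤ α → α < β → β ≤ k → s((α, c α), (β, c β)) ∈ EC}
    {e0 : {e : Sym2 (ℕ × ℕ) // e ∈ EC}} {e : Sym2 CliqueVtx}
    {γ i δ j : ℕ} (hdec : e0.1 = s((γ, i), (δ, j)))
    (hγ1 : 1 ≤ γ) (hγδ : γ < δ) (hδk : δ ≤ k)
    (hi1 : 1 ≤ i) (hin : i ≤ n γ) (hj1 : 1 ≤ j) (hjn : j ≤ n δ)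
    (he : cHostPage k n EC (some e0) e ∨ e ∈ cNew k ∧ sigB k EC c hc2 e = some e0) :
    (∃ μ, 1 ≤ μ ∧ μ ≤ k + 1 ∧ e = s(bV n μ, CliqueVtx.u μ 1)) ∨
    (∃ ν p q, 1 ≤ ν ∧ ν ≤ k ∧ 1 ≤ p ∧ p ≤ q ∧ q ≤ n ν + 1 ∧
      ((p = 1 ∧ q = n ν + 1 ∧ ν ≠ γ ∧ ν ≠ δ) ∨
       (ν = γ ∧ p = 1 ∧ q ≤ i) ∨
       (ν = γ ∧ p = i + 1 ∧ q = n ν + 1) ∨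
       (ν = δ ∧ p = 1 ∧ q ≤ j) ∨
       (ν = δ ∧ p = j + 1 ∧ q = n ν + 1)) ∧
      e = s(CliqueVtx.u ν p, CliqueVtx.u ν q)) ∨
    e = s(CliqueVtx.u γ i, CliqueVtx.u δ (j+1)) ∨
    e = s(CliqueVtx.u γ (i+1), CliqueVtx.u δ j) ∨
    (e = s(CliqueVtx.x γ, CliqueVtx.x δ) ∧ i = c γ ∧ j = c δ) := by
  rcases he with h | ⟨hN, hσ⟩
  · simp only [cHostPage] at h
    rcases h with ⟨μ, h1, h2, h3⟩ | ⟨γ', i', δ', j', hdec', hγδ', hfam⟩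
    · left; exact ⟨μ, h1, h2, by rw [h3, aV_eq]⟩
    · obtain ⟨rfl, rfl, rfl, rfl⟩ := decomp_unique (hdec.symm.trans hdec') hγδ hγδ'
      rcases hfam with ⟨ν, hv1, hvk, hvγ, hvδ, heq⟩ | ⟨hgt, heq⟩ | ⟨hlt, heq⟩ |
        ⟨hgt, heq⟩ | ⟨hlt, heq⟩ | heq | heq
      · exact Or.inr (Or.inl ⟨ν, 1, n ν + 1, hv1, hvk, le_rfl, by omega, le_rfl,
          Or.inl ⟨rfl, rfl, hvγ, hvδ⟩, heq⟩)
      · exact Or.inr (Or.inl ⟨γ, 1, i, hγ1, by omega, le_rfl, hi1, by omega,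
          Or.inr (Or.inl ⟨rfl, rfl, le_rfl⟩), heq⟩)
      · exact Or.inr (Or.inl ⟨γ, i + 1, n γ + 1, hγ1, by omega, by omega, by omega, le_rfl,
          Or.inr (Or.inr (Or.inl ⟨rfl, rfl, rfl⟩)), heq⟩)
      · exact Or.inr (Or.inl ⟨δ, 1, j, by omega, hδk, le_rfl, hj1, by omega,
          Or.inr (Or.inr (Or.inr (Or.inl ⟨rfl, rfl, le_rfl⟩))), heq⟩)
      · exact Or.inr (Or.inl ⟨δ, j + 1, n δ + 1, by omega, hδk, by omega, by omega, le_rfl,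
          Or.inr (Or.inr (Or.inr (Or.inr ⟨rfl, rfl, rfl⟩))), heq⟩)
      · exact Or.inr (Or.inr (Or.inl heq))
      · exact Or.inr (Or.inr (Or.inr (Or.inl heq)))
  · simp only [cNew, Set.mem_setOf_eq] at hN
    rcases hN with ⟨a, b, h1, h2, h3, h4⟩ | ⟨a, h1, h2, h4 | h4⟩
    · obtain ⟨a', b', h1', h2', h3', heq, hval⟩ := sigB_spec hσ
      rw [h4] at heq
      have hab : a' = a ∧ b' = b := by
        rw [Sym2.eq_iff] at heq
        rcases heq with ⟨ha, hb⟩ | ⟨ha, hb⟩ <;>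
          simp only [CliqueVtx.x.injEq] at ha hb <;> omega
      obtain ⟨rfl, rfl⟩ := hab
      obtain ⟨rfl, rfl, rfl, rfl⟩ := decomp_unique (hdec.symm.trans hval) hγδ h2'
      exact Or.inr (Or.inr (Or.inr (Or.inr ⟨h4, rfl, rfl⟩)))
    · rw [h4, pendant_none] at hσ; exact absurd hσ (by simp)
    · rw [h4, pendant_none] at hσ; exact absurd hσ (by simp)

end Stmt6Shape
section Stmt6Helpers
open CliqueVtx

lemma rel2 (n c : ℕ → ℕ) (a b : ℕ) (ha : 1 ≤ a) (hb : 1 ≤ b) :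
    (a < b ∧ cOffset n a + n a + 2 ≤ cOffset n b) ∨
    (a = b ∧ cOffset n a = cOffset n b ∧ n a = n b ∧ c a = c b) ∨
    (b < a ∧ cOffset n b + n b + 2 ≤ cOffset n a) := by
  rcases Nat.lt_trichotomy a b with h | rfl | h
  · exact Or.inl ⟨h, keyG n ha h⟩
  · exact Or.inr (Or.inl ⟨rfl, rfl, rfl, rfl⟩)
  · exact Or.inr (Or.inr ⟨h, keyG n hb h⟩)

lemma valid_lt (n : ℕ → ℕ) {b o : ℕ} (hv : (b = 0 ∧ o = 0) ∨ (1 ≤ b ∧ o ≤ n b + 1))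
    {b' : ℕ} (hb : b < b') (o' : ℕ) : cOffset n b + o < cOffset n b' + o' := by
  rcases hv with ⟨rfl, rfl⟩ | ⟨h1, h2⟩
  · have := key1 n (show 1 ≤ b' from hb)
    have := cOffset_zero n
    omega
  · have := keyG n h1 hb
    omega

lemma host_val {k : ℕ} {n : ℕ → ℕ} {b o : ℕ} (h : cHost k n (CliqueVtx.u b o)) :
    (b = 0 ∧ o = 0) ∨ (1 ≤ b ∧ o ≤ n b + 1) := by
  simp only [cHost] at h
  rcases h with ⟨h1, h2⟩ | ⟨h1, h2, h3⟩ | ⟨h1, h2⟩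
  · exact Or.inl ⟨h1, h2⟩
  · exact Or.inr ⟨h1, h3⟩
  · exact Or.inr ⟨by omega, by omega⟩

lemma mem_u {k : ℕ} {n : ℕ → ℕ} {b o : ℕ}
    (h : cHost k n (CliqueVtx.u b o) ∨
      ∃ α, 1 ≤ α ∧ α ≤ k ∧ CliqueVtx.u b o = CliqueVtx.x α) :
    cHost k n (CliqueVtx.u b o) := by
  rcases h with h | ⟨a, _, _, h⟩
  · exact h
  · exact CliqueVtx.noConfusion h

lemma mem_x {k : ℕ} {n : ℕ → ℕ} {a : ℕ}
    (h : cHost k n (CliqueVtx.x a) ∨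
      ∃ α, 1 ≤ α ∧ α ≤ k ∧ CliqueVtx.x a = CliqueVtx.x α) :
    1 ≤ a ∧ a ≤ k := by
  rcases h with h | ⟨α, h1, h2, h3⟩
  · exact absurd h (by simp [cHost])
  · obtain rfl : a = α := by injection h3
    exact ⟨h1, h2⟩

end Stmt6Helpers
section Stmt6Fwd
open CliqueVtx

lemma mkCross {V : Type*} (pos : V → ℕ) {e f : Sym2 V} (v1 v2 v3 v4 : V)
    (he : e = s(v1, v3)) (hf : f = s(v2, v4))
    (h1 : pos v1 < pos v2) (h2 : pos v2 < pos v3) (h3 : pos v3 < pos v4) :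
    EdgesCross pos e f := ⟨v1, v2, v3, v4, he, hf, h1, h2, h3⟩

lemma bV_one (n : ℕ → ℕ) : bV n 1 = CliqueVtx.u 0 0 := if_pos rfl

lemma bV_succ (n : ℕ → ℕ) {a : ℕ} (h : 1 ≤ a) :
    bV n (a + 1) = CliqueVtx.u a (n a + 1) := by
  unfold bV
  rw [if_neg (by omega)]
  simp

lemma bV_spec {k : ℕ} (n : ℕ → ℕ) {μ : ℕ} (h1 : 1 ≤ μ) (h2 : μ ≤ k + 1) :
    cHost k n (bV n μ) ∧ cPos n (bV n μ) + 1 = cOffset n μ := by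
  unfold bV
  split
  · rename_i h; subst h
    refine ⟨Or.inl ⟨rfl, rfl⟩, ?_⟩
    simp [cPos, cOffset_one, cOffset_zero]
  · rename_i h
    have h3 : 1 ≤ μ - 1 := by omega
    have h4 := cOffset_succ n h3
    rw [show μ - 1 + 1 = μ by omega] at h4
    refine ⟨Or.inr (Or.inl ⟨h3, by omega, le_rfl⟩), ?_⟩
    simp only [cPos]
    omega

end Stmt6Fwd
section Stmt6Fwd2
open CliqueVtx

lemma stmt6_fwd (k : ℕ) (n : ℕ → ℕ) (hn : ∀ α, 1 ≤ α → α ≤ k → 1 ≤ n α)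
    (EC : Set (Sym2 (ℕ × ℕ)))
    (hEC : ∀ e ∈ EC, ∃ α i β j, e = s((α, i), (β, j)) ∧
      1 ≤ α ∧ α < β ∧ β ≤ k ∧ 1 ≤ i ∧ i ≤ n α ∧ 1 ≤ j ∧ j ≤ n β)
    (pos : CliqueVtx → ℕ) (σ : Sym2 CliqueVtx → Option {e : Sym2 (ℕ × ℕ) // e ∈ EC})
    (hinj : Set.InjOn pos {w | cHost k n w ∨ ∃ α, 1 ≤ α ∧ α ≤ k ∧ w = CliqueVtx.x α})
    (hord : ∀ y z, cHost k n y → cHost k n z → (cPos n y < cPos n z ↔ pos y < pos z))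
    (hcr : ∀ p e f, (cHostPage k n EC p e ∨ e ∈ cNew k ∧ σ e = p) →
        (cHostPage k n EC p f ∨ f ∈ cNew k ∧ σ f = p) → ¬ EdgesCross pos e f) :
    ∃ c : ℕ → ℕ, (∀ α, 1 ≤ α → α ≤ k → 1 ≤ c α ∧ c α ≤ n α) ∧
      ∀ α β, 1 ≤ α → α < β → β ≤ k → s((α, c α), (β, c β)) ∈ EC := by
  classical
  have hne : ∀ a w, 1 ≤ a → a ≤ k → cHost k n w → pos (CliqueVtx.x a) ≠ pos w := by
    intro a w ha1 hak hw heq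
    have h2 := hinj (Or.inr ⟨a, ha1, hak, rfl⟩) (Or.inl hw) heq
    subst h2
    exact absurd hw (by simp [cHost])
  have hlt : ∀ w w', cHost k n w → cHost k n w' → cPos n w < cPos n w' → pos w < pos w' :=
    fun w w' h1 h2 h => (hord w w' h1 h2).1 h
  have hle : ∀ w w', cHost k n w → cHost k n w' → cPos n w ≤ cPos n w' → pos w ≤ pos w' := by
    intro w w' h1 h2 h
    by_contra hc
    push_neg at hc
    have := (hord w' w h2 h1).2 hc
    omega
  have M : ∀ b o, ((b = 0 ∧ o = 0) ∨ (1 ≤ b ∧ b ≤ k ∧ o ≤ n b + 1) ∨ (b = k + 1 ∧ o ≤ 1)) →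
      cHost k n (CliqueVtx.u b o) := fun b o h => h
  have hU : ∀ b o b' o', cHost k n (CliqueVtx.u b o) → cHost k n (CliqueVtx.u b' o') →
      cOffset n b + o < cOffset n b' + o' →
      pos (CliqueVtx.u b o) < pos (CliqueVtx.u b' o') :=
    fun b o b' o' h1 h2 h => hlt _ _ h1 h2 (by simpa [cPos] using h)
  have hUe : ∀ b o b' o', cHost k n (CliqueVtx.u b o) → cHost k n (CliqueVtx.u b' o') →
      cOffset n b + o ≤ cOffset n b' + o' →
      pos (CliqueVtx.u b o) ≤ pos (CliqueVtx.u b' o') :=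
    fun b o b' o' h1 h2 h => hle _ _ h1 h2 (by simpa [cPos] using h)
  -- Step 1/2: the new vertex x a lies strictly inside its block
  have hstep : ∀ a, 1 ≤ a → a ≤ k →
      pos (CliqueVtx.u a 1) < pos (CliqueVtx.x a) ∧
      pos (CliqueVtx.x a) < pos (CliqueVtx.u a (n a + 1)) := by
    intro a ha1 hak
    have hna := hn a ha1 hak
    have hE1 : s(CliqueVtx.x a, CliqueVtx.u a 0) ∈ cNew k :=
      Or.inr ⟨a, ha1, hak, Or.inl rfl⟩
    have hE2 : s(CliqueVtx.x a, CliqueVtx.u (a+1) 0) ∈ cNew k :=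
      Or.inr ⟨a, ha1, hak, Or.inr rfl⟩
    obtain ⟨hBa, hBap⟩ := bV_spec (k := k) n ha1 (by omega)
    have hGaa := cOffset_succ n ha1
    have Ma0 : cHost k n (CliqueVtx.u a 0) := M a 0 (by omega)
    have Ma1 : cHost k n (CliqueVtx.u a 1) := M a 1 (by omega)
    have MaT : cHost k n (CliqueVtx.u a (n a + 1)) := M a (n a + 1) (by omega)
    have Mb0 : cHost k n (CliqueVtx.u (a+1) 0) := M (a+1) 0 (by omega)
    have Mb1 : cHost k n (CliqueVtx.u (a+1) 1) := M (a+1) 1 (by omega)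
    have p01 : pos (CliqueVtx.u a 0) < pos (CliqueVtx.u a 1) := hU a 0 a 1 Ma0 Ma1 (by omega)
    have p1T : pos (CliqueVtx.u a 1) < pos (CliqueVtx.u a (n a + 1)) :=
      hU _ _ _ _ Ma1 MaT (by omega)
    have pT0 : pos (CliqueVtx.u a (n a + 1)) < pos (CliqueVtx.u (a+1) 0) :=
      hU _ _ _ _ MaT Mb0 (by omega)
    have p0'1' : pos (CliqueVtx.u (a+1) 0) < pos (CliqueVtx.u (a+1) 1) :=
      hU _ _ _ _ Mb0 Mb1 (by omega)
    have pB0 : pos (bV n a) < pos (CliqueVtx.u a 0) :=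
      hlt _ _ hBa Ma0 (by simp only [cPos] at hBap ⊢; omega)
    have hXB := hne a (bV n a) ha1 hak hBa
    have hX0 := hne a (CliqueVtx.u a 0) ha1 hak Ma0
    have hX1 := hne a (CliqueVtx.u a 1) ha1 hak Ma1
    have hXT := hne a (CliqueVtx.u a (n a + 1)) ha1 hak MaT
    have hX0' := hne a (CliqueVtx.u (a+1) 0) ha1 hak Mb0
    have hX1' := hne a (CliqueVtx.u (a+1) 1) ha1 hak Mb1
    -- A1: if σ E1 is a real page then bV a < x a < u a 1
    have hsome1 : ∀ e0, σ s(CliqueVtx.x a, CliqueVtx.u a 0) = some e0 →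
        pos (bV n a) < pos (CliqueVtx.x a) ∧
        pos (CliqueVtx.x a) < pos (CliqueVtx.u a 1) := by
      intro e0 hp1
      have hfm : cHostPage k n EC (some e0) s(bV n a, aV k a) := Or.inl ⟨a, ha1, by omega, rfl⟩
      have paA : pos (CliqueVtx.u a 0) < pos (aV k a) := by rw [aV_eq]; exact p01
      rcases Nat.lt_or_ge (pos (CliqueVtx.x a)) (pos (bV n a)) with hc | hc
      · exact absurd (mkCross pos (CliqueVtx.x a) (bV n a) (CliqueVtx.u a 0) (aV k a)
            rfl rfl hc pB0 paA)
          (hcr (some e0) _ _ (Or.inr ⟨hE1, hp1⟩) (Or.inl hfm))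
      · refine ⟨by omega, ?_⟩
        by_contra hc2
        push_neg at hc2
        have h2 : pos (aV k a) < pos (CliqueVtx.x a) := by rw [aV_eq]; omega
        exact absurd (mkCross pos (bV n a) (CliqueVtx.u a 0) (aV k a) (CliqueVtx.x a)
            rfl Sym2.eq_swap pB0 paA h2)
          (hcr (some e0) _ _ (Or.inl hfm) (Or.inr ⟨hE1, hp1⟩))
    -- A3: if σ E2 is a real page then u a (n a + 1) < x a < u (a+1) 1
    have hsome2 : ∀ e0, σ s(CliqueVtx.x a, CliqueVtx.u (a+1) 0) = some e0 →
        pos (CliqueVtx.u a (n a + 1)) < pos (CliqueVtx.x a) ∧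
        pos (CliqueVtx.x a) < pos (CliqueVtx.u (a+1) 1) := by
      intro e0 hp2
      have hfm : cHostPage k n EC (some e0) s(bV n (a+1), aV k (a+1)) :=
        Or.inl ⟨a + 1, by omega, by omega, rfl⟩
      have pBs : pos (bV n (a+1)) = pos (CliqueVtx.u a (n a + 1)) := by rw [bV_succ n ha1]
      have paA : pos (CliqueVtx.u (a+1) 0) < pos (aV k (a+1)) := by rw [aV_eq]; exact p0'1'
      have pB0' : pos (bV n (a+1)) < pos (CliqueVtx.u (a+1) 0) := by rw [pBs]; exact pT0
      rcases Nat.lt_or_ge (pos (CliqueVtx.x a)) (pos (CliqueVtx.u a (n a + 1))) with hc | hc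
      · have hc' : pos (CliqueVtx.x a) < pos (bV n (a+1)) := by omega
        exact absurd (mkCross pos (CliqueVtx.x a) (bV n (a+1)) (CliqueVtx.u (a+1) 0)
            (aV k (a+1)) rfl rfl hc' pB0' paA)
          (hcr (some e0) _ _ (Or.inr ⟨hE2, hp2⟩) (Or.inl hfm))
      · refine ⟨by omega, ?_⟩
        by_contra hc2
        push_neg at hc2
        have h2 : pos (aV k (a+1)) < pos (CliqueVtx.x a) := by rw [aV_eq]; omega
        exact absurd (mkCross pos (bV n (a+1)) (CliqueVtx.u (a+1) 0) (aV k (a+1))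
            (CliqueVtx.x a) rfl Sym2.eq_swap pB0' paA h2)
          (hcr (some e0) _ _ (Or.inl hfm) (Or.inr ⟨hE2, hp2⟩))
    -- p_d memberships of the gadget pairs
    have hd1a : cHostPage k n EC none s(bV n a, CliqueVtx.u a 0) :=
      Or.inl ⟨a, ha1, by omega, Or.inl rfl⟩
    have hd1a' : cHostPage k n EC none s(bV n (a+1), CliqueVtx.u (a+1) 0) :=
      Or.inl ⟨a + 1, by omega, by omega, Or.inl rfl⟩
    have hd2a : cHostPage k n EC none s(CliqueVtx.u a 0, aV k a) :=
      Or.inl ⟨a, ha1, by omega, Or.inr rfl⟩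
    have hd2a' : cHostPage k n EC none s(CliqueVtx.u (a+1) 0, aV k (a+1)) :=
      Or.inl ⟨a + 1, by omega, by omega, Or.inr rfl⟩
    -- A2: σ E1 = none excludes (u a (n a + 1), u (a+1) 0)
    have hnone1a : σ s(CliqueVtx.x a, CliqueVtx.u a 0) = none →
        ¬(pos (CliqueVtx.u a (n a + 1)) < pos (CliqueVtx.x a) ∧
          pos (CliqueVtx.x a) < pos (CliqueVtx.u (a+1) 0)) := by
      intro hp1 ⟨hc1, hc2⟩
      have hb : pos (CliqueVtx.u a 0) < pos (bV n (a+1)) := by rw [bV_succ n ha1]; omega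
      have hbx : pos (bV n (a+1)) < pos (CliqueVtx.x a) := by rw [bV_succ n ha1]; omega
      exact absurd (mkCross pos (CliqueVtx.u a 0) (bV n (a+1)) (CliqueVtx.x a)
          (CliqueVtx.u (a+1) 0) Sym2.eq_swap rfl hb hbx hc2)
        (hcr none _ _ (Or.inr ⟨hE1, hp1⟩) (Or.inl hd1a'))
    -- A6: σ E1 = none excludes (u (a+1) 0, u (a+1) 1)
    have hnone1b : σ s(CliqueVtx.x a, CliqueVtx.u a 0) = none →
        ¬(pos (CliqueVtx.u (a+1) 0) < pos (CliqueVtx.x a) ∧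
          pos (CliqueVtx.x a) < pos (CliqueVtx.u (a+1) 1)) := by
      intro hp1 ⟨hc1, hc2⟩
      have h3 : pos (CliqueVtx.u a 0) < pos (CliqueVtx.u (a+1) 0) := by omega
      have h4 : pos (CliqueVtx.x a) < pos (aV k (a+1)) := by rw [aV_eq]; omega
      exact absurd (mkCross pos (CliqueVtx.u a 0) (CliqueVtx.u (a+1) 0) (CliqueVtx.x a)
          (aV k (a+1)) Sym2.eq_swap rfl h3 hc1 h4)
        (hcr none _ _ (Or.inr ⟨hE1, hp1⟩) (Or.inl hd2a'))
    -- A4: σ E2 = none excludes (u a 0, u a 1)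
    have hnone2a : σ s(CliqueVtx.x a, CliqueVtx.u (a+1) 0) = none →
        ¬(pos (CliqueVtx.u a 0) < pos (CliqueVtx.x a) ∧
          pos (CliqueVtx.x a) < pos (CliqueVtx.u a 1)) := by
      intro hp2 ⟨hc1, hc2⟩
      have h2 : pos (CliqueVtx.x a) < pos (aV k a) := by rw [aV_eq]; omega
      have h3 : pos (aV k a) < pos (CliqueVtx.u (a+1) 0) := by rw [aV_eq]; omega
      exact absurd (mkCross pos (CliqueVtx.u a 0) (CliqueVtx.x a) (aV k a)
          (CliqueVtx.u (a+1) 0) rfl rfl hc1 h2 h3)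
        (hcr none _ _ (Or.inl hd2a) (Or.inr ⟨hE2, hp2⟩))
    -- A5: σ E2 = none excludes (bV a, u a 0)
    have hnone2b : σ s(CliqueVtx.x a, CliqueVtx.u (a+1) 0) = none →
        ¬(pos (bV n a) < pos (CliqueVtx.x a) ∧
          pos (CliqueVtx.x a) < pos (CliqueVtx.u a 0)) := by
      intro hp2 ⟨hc1, hc2⟩
      have h3 : pos (CliqueVtx.u a 0) < pos (CliqueVtx.u (a+1) 0) := by omega
      exact absurd (mkCross pos (bV n a) (CliqueVtx.x a) (CliqueVtx.u a 0)
          (CliqueVtx.u (a+1) 0) rfl rfl hc1 hc2 h3)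
        (hcr none _ _ (Or.inl hd1a) (Or.inr ⟨hE2, hp2⟩))
    -- C1: both pendant edges on the dummy page force u a 0 < x a
    have hlow : σ s(CliqueVtx.x a, CliqueVtx.u a 0) = none →
        σ s(CliqueVtx.x a, CliqueVtx.u (a+1) 0) = none →
        pos (CliqueVtx.u a 0) < pos (CliqueVtx.x a) := by
      intro hp1 hp2
      by_contra hc
      push_neg at hc
      have hc' : pos (CliqueVtx.x a) < pos (CliqueVtx.u a 0) := by
        have := hX0; omega
      have M00 : cHost k n (CliqueVtx.u 0 0) := M 0 0 (by omega)
      have MK1 : cHost k n (CliqueVtx.u (k+1) 1) := M (k+1) 1 (by omega)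
      rcases Nat.lt_or_ge (pos (CliqueVtx.x a)) (pos (CliqueVtx.u 0 0)) with hq | hq
      · -- cross E2 vs d4
        have h2 : pos (CliqueVtx.u 0 0) < pos (CliqueVtx.u (a+1) 0) := by
          refine hU 0 0 (a+1) 0 M00 Mb0 ?_
          have := key1 n (show 1 ≤ a + 1 by omega)
          have := cOffset_zero n
          omega
        have h3 : pos (CliqueVtx.u (a+1) 0) < pos (CliqueVtx.u (k+1) 1) := by
          refine hU (a+1) 0 (k+1) 1 Mb0 MK1 ?_
          have := cOffset_mono n (show a + 1 ≤ k + 1 by omega)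
          omega
        exact absurd (mkCross pos (CliqueVtx.x a) (CliqueVtx.u 0 0) (CliqueVtx.u (a+1) 0)
            (CliqueVtx.u (k+1) 1) rfl rfl hq h2 h3)
          (hcr none _ _ (Or.inr ⟨hE2, hp2⟩) (Or.inl (Or.inr (Or.inr rfl))))
      · have hq' : pos (CliqueVtx.u 0 0) < pos (CliqueVtx.x a) := by
          have := hne a (CliqueVtx.u 0 0) ha1 hak M00; omega
        obtain ⟨g, hg⟩ : ∃ g, g = Nat.findGreatest
            (fun m => pos (CliqueVtx.u m 0) < pos (CliqueVtx.x a)) a := ⟨_, rfl⟩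
        have hga : g ≤ a := hg ▸ Nat.findGreatest_le a
        have hPg : pos (CliqueVtx.u g 0) < pos (CliqueVtx.x a) := by
          rw [hg]
          exact Nat.findGreatest_spec
            (P := fun m => pos (CliqueVtx.u m 0) < pos (CliqueVtx.x a)) (Nat.zero_le a) hq'
        have hgne : g < a := by
          rcases Nat.lt_or_ge g a with h | h
          · exact h
          · have hga' : g = a := by omega
            rw [hga'] at hPg; omega
        have Mg0 : cHost k n (CliqueVtx.u g 0) := by
          rcases Nat.eq_zero_or_pos g with h | h
          · exact M g 0 (by omega)
          · exact M g 0 (by omega)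
        have Mg1 : cHost k n (CliqueVtx.u (g+1) 0) := M (g+1) 0 (by omega)
        have hnext : pos (CliqueVtx.x a) < pos (CliqueVtx.u (g+1) 0) := by
          have h5 := Nat.findGreatest_is_greatest
            (P := fun m => pos (CliqueVtx.u m 0) < pos (CliqueVtx.x a))
            (show Nat.findGreatest _ a < g + 1 from hg ▸ (by omega)) (show g + 1 ≤ a by omega)
          have h6 := hne a (CliqueVtx.u (g+1) 0) ha1 hak Mg1
          omega
        have hpair : cHostPage k n EC none s(CliqueVtx.u g 0, CliqueVtx.u (g+1) 0) := by
          rcases Nat.eq_zero_or_pos g with rfl | hg1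
          · refine Or.inl ⟨1, le_rfl, by omega, Or.inl ?_⟩
            rw [bV_one]
          · exact Or.inr (Or.inl ⟨g, hg1, by omega, rfl⟩)
        rcases Nat.lt_or_ge (g+1) a with hcase | hcase
        · -- cross pair vs E1
          have h3 : pos (CliqueVtx.u (g+1) 0) < pos (CliqueVtx.u a 0) := by
            refine hU (g+1) 0 a 0 Mg1 Ma0 ?_
            have := keyG n (show 1 ≤ g + 1 by omega) hcase
            omega
          exact absurd (mkCross pos (CliqueVtx.u g 0) (CliqueVtx.x a) (CliqueVtx.u (g+1) 0)
              (CliqueVtx.u a 0) rfl rfl hPg hnext h3)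
            (hcr none _ _ (Or.inl hpair) (Or.inr ⟨hE1, hp1⟩))
        · -- g + 1 = a : cross pair vs E2
          have h3 : pos (CliqueVtx.u (g+1) 0) < pos (CliqueVtx.u (a+1) 0) := by
            refine hU (g+1) 0 (a+1) 0 Mg1 Mb0 ?_
            have := keyG n (show 1 ≤ g + 1 by omega) (show g + 1 < a + 1 by omega)
            omega
          exact absurd (mkCross pos (CliqueVtx.u g 0) (CliqueVtx.x a) (CliqueVtx.u (g+1) 0)
              (CliqueVtx.u (a+1) 0) rfl rfl hPg hnext h3)
            (hcr none _ _ (Or.inl hpair) (Or.inr ⟨hE2, hp2⟩))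
    -- C2: both pendant edges on the dummy page force x a < u (a+1) 0
    have hhigh : σ s(CliqueVtx.x a, CliqueVtx.u a 0) = none →
        σ s(CliqueVtx.x a, CliqueVtx.u (a+1) 0) = none →
        pos (CliqueVtx.x a) < pos (CliqueVtx.u (a+1) 0) := by
      intro hp1 hp2
      by_contra hc
      push_neg at hc
      have hc' : pos (CliqueVtx.u (a+1) 0) < pos (CliqueVtx.x a) := by
        have := hX0'; omega
      have M00 : cHost k n (CliqueVtx.u 0 0) := M 0 0 (by omega)
      have MK0 : cHost k n (CliqueVtx.u (k+1) 0) := M (k+1) 0 (by omega)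
      have MK1 : cHost k n (CliqueVtx.u (k+1) 1) := M (k+1) 1 (by omega)
      obtain ⟨g, hg⟩ : ∃ g, g = Nat.findGreatest
          (fun m => pos (CliqueVtx.u m 0) < pos (CliqueVtx.x a)) (k+1) := ⟨_, rfl⟩
      have hga : a + 1 ≤ g := hg ▸ Nat.le_findGreatest
        (P := fun m => pos (CliqueVtx.u m 0) < pos (CliqueVtx.x a)) (by omega) hc'
      have hgk : g ≤ k + 1 := hg ▸ Nat.findGreatest_le (k+1)
      have Mg0 : cHost k n (CliqueVtx.u g 0) := M g 0 (by omega)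
      have hPg : pos (CliqueVtx.u g 0) < pos (CliqueVtx.x a) := by
        rw [hg]
        exact Nat.findGreatest_spec
          (P := fun m => pos (CliqueVtx.u m 0) < pos (CliqueVtx.x a))
          (show a + 1 ≤ k + 1 by omega) hc'
      rcases Nat.lt_or_ge g (k+1) with hcase | hcase
      · -- g ≤ k
        have Mg1 : cHost k n (CliqueVtx.u (g+1) 0) := M (g+1) 0 (by omega)
        have hnext : pos (CliqueVtx.x a) < pos (CliqueVtx.u (g+1) 0) := by
          have h5 := Nat.findGreatest_is_greatest
            (P := fun m => pos (CliqueVtx.u m 0) < pos (CliqueVtx.x a))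
            (show Nat.findGreatest _ (k+1) < g + 1 from hg ▸ (by omega))
            (show g + 1 ≤ k + 1 by omega)
          have h6 := hne a (CliqueVtx.u (g+1) 0) ha1 hak Mg1
          omega
        have hpair : cHostPage k n EC none s(CliqueVtx.u g 0, CliqueVtx.u (g+1) 0) :=
          Or.inr (Or.inl ⟨g, by omega, by omega, rfl⟩)
        rcases Nat.lt_or_ge (a+1) g with hcase2 | hcase2
        · -- cross E2 vs pair
          have h1 : pos (CliqueVtx.u (a+1) 0) < pos (CliqueVtx.u g 0) := by
            refine hU (a+1) 0 g 0 Mb0 Mg0 ?_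
            have := keyG n (show 1 ≤ a + 1 by omega) hcase2
            omega
          exact absurd (mkCross pos (CliqueVtx.u (a+1) 0) (CliqueVtx.u g 0) (CliqueVtx.x a)
              (CliqueVtx.u (g+1) 0) Sym2.eq_swap rfl h1 hPg hnext)
            (hcr none _ _ (Or.inr ⟨hE2, hp2⟩) (Or.inl hpair))
        · -- g = a + 1 : cross E1 vs pair
          have hge : g = a + 1 := by omega
          have h1 : pos (CliqueVtx.u a 0) < pos (CliqueVtx.u g 0) := by
            refine hU a 0 g 0 Ma0 Mg0 ?_
            have := keyG n ha1 (show a < g by omega)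
            omega
          exact absurd (mkCross pos (CliqueVtx.u a 0) (CliqueVtx.u g 0) (CliqueVtx.x a)
              (CliqueVtx.u (g+1) 0) Sym2.eq_swap rfl h1 hPg hnext)
            (hcr none _ _ (Or.inr ⟨hE1, hp1⟩) (Or.inl hpair))
      · -- g = k + 1
        have hgk1 : g = k + 1 := by omega
        have hPk : pos (CliqueVtx.u (k+1) 0) < pos (CliqueVtx.x a) := by
          rw [hgk1] at hPg; exact hPg
        rcases Nat.lt_or_ge (pos (CliqueVtx.x a)) (pos (CliqueVtx.u (k+1) 1)) with hq | hq
        · -- cross E1 vs d2(k+1)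
          have hd2k : cHostPage k n EC none s(CliqueVtx.u (k+1) 0, aV k (k+1)) :=
            Or.inl ⟨k + 1, by omega, le_rfl, Or.inr rfl⟩
          have h1 : pos (CliqueVtx.u a 0) < pos (CliqueVtx.u (k+1) 0) := by
            refine hU a 0 (k+1) 0 Ma0 MK0 ?_
            have := keyG n ha1 (show a < k + 1 by omega)
            omega
          have h4 : pos (CliqueVtx.x a) < pos (aV k (k+1)) := by rw [aV_eq]; omega
          exact absurd (mkCross pos (CliqueVtx.u a 0) (CliqueVtx.u (k+1) 0) (CliqueVtx.x a)
              (aV k (k+1)) Sym2.eq_swap rfl h1 hPk h4)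
            (hcr none _ _ (Or.inr ⟨hE1, hp1⟩) (Or.inl hd2k))
        · -- x a beyond u (k+1) 1 : cross d4 vs E1
          have hq' : pos (CliqueVtx.u (k+1) 1) < pos (CliqueVtx.x a) := by
            have := hne a (CliqueVtx.u (k+1) 1) ha1 hak MK1; omega
          have h1 : pos (CliqueVtx.u 0 0) < pos (CliqueVtx.u a 0) := by
            refine hU 0 0 a 0 M00 Ma0 ?_
            have := key1 n ha1
            have := cOffset_zero n
            omega
          have h2 : pos (CliqueVtx.u a 0) < pos (CliqueVtx.u (k+1) 1) := by
            refine hU a 0 (k+1) 1 Ma0 MK1 ?_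
            have := cOffset_mono n (show a ≤ k + 1 by omega)
            omega
          exact absurd (mkCross pos (CliqueVtx.u 0 0) (CliqueVtx.u a 0) (CliqueVtx.u (k+1) 1)
              (CliqueVtx.x a) rfl Sym2.eq_swap h1 h2 hq')
            (hcr none _ _ (Or.inl (Or.inr (Or.inr rfl))) (Or.inr ⟨hE1, hp1⟩))
    -- combine all cases
    cases hp1 : σ s(CliqueVtx.x a, CliqueVtx.u a 0) with
    | some e1 =>
      obtain ⟨hs1, hs2⟩ := hsome1 e1 hp1
      cases hp2 : σ s(CliqueVtx.x a, CliqueVtx.u (a+1) 0) with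
      | some e2 =>
        obtain ⟨ht1, ht2⟩ := hsome2 e2 hp2
        omega
      | none =>
        have h4 := hnone2a hp2
        have h5 := hnone2b hp2
        omega
    | none =>
      cases hp2 : σ s(CliqueVtx.x a, CliqueVtx.u (a+1) 0) with
      | some e2 =>
        obtain ⟨ht1, ht2⟩ := hsome2 e2 hp2
        have h4 := hnone1a hp1
        have h5 := hnone1b hp1
        omega
      | none =>
        have h2 := hlow hp1 hp2
        have h3 := hhigh hp1 hp2
        have h4 := hnone2a hp2
        have h5 := hnone1a hp1
        omega
  -- the clique choice function
  have hkey0 : ∀ a, ∃ ca, 1 ≤ a → a ≤ k → (1 ≤ ca ∧ ca ≤ n a) ∧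
      pos (CliqueVtx.u a ca) < pos (CliqueVtx.x a) ∧
      pos (CliqueVtx.x a) < pos (CliqueVtx.u a (ca + 1)) := by
    intro a
    by_cases h : 1 ≤ a ∧ a ≤ k
    · obtain ⟨ha1, hak⟩ := h
      obtain ⟨hs1, hs2⟩ := hstep a ha1 hak
      have hna := hn a ha1 hak
      obtain ⟨g, hg⟩ : ∃ g, g = Nat.findGreatest
          (fun m => pos (CliqueVtx.u a m) < pos (CliqueVtx.x a)) (n a) := ⟨_, rfl⟩
      have h1 : 1 ≤ g := by
        rw [hg]
        exact Nat.le_findGreatest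
          (P := fun m => pos (CliqueVtx.u a m) < pos (CliqueVtx.x a)) hna hs1
      have h2 : g ≤ n a := by
        rw [hg]
        exact Nat.findGreatest_le (n a)
      have h3 : pos (CliqueVtx.u a g) < pos (CliqueVtx.x a) := by
        rw [hg]
        exact Nat.findGreatest_spec
          (P := fun m => pos (CliqueVtx.u a m) < pos (CliqueVtx.x a)) hna hs1
      have h4 : pos (CliqueVtx.x a) < pos (CliqueVtx.u a (g + 1)) := by
        rcases Nat.lt_or_ge g (n a) with hcn | hcn
        · have h5 : ¬ pos (CliqueVtx.u a (g + 1)) < pos (CliqueVtx.x a) :=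
            Nat.findGreatest_is_greatest
              (P := fun m => pos (CliqueVtx.u a m) < pos (CliqueVtx.x a))
              (show Nat.findGreatest _ (n a) < g + 1 from hg ▸ (by omega))
              (show g + 1 ≤ n a by omega)
          have h6 := hne a (CliqueVtx.u a (g + 1)) ha1 hak (M a (g + 1) (by omega))
          omega
        · have he : g = n a := by omega
          rw [he]
          exact hs2
      exact ⟨g, fun _ _ => ⟨⟨h1, h2⟩, h3, h4⟩⟩
    · exact ⟨1, fun h1 h2 => absurd ⟨h1, h2⟩ h⟩
  choose cF hkey using hkey0
  have hedge : ∀ a b, 1 ≤ a → a < b → b ≤ k → s((a, cF a), (b, cF b)) ∈ EC := by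
    intro a b ha1 hab hbk
    have hak : a ≤ k := by omega
    have hb1 : 1 ≤ b := by omega
    have hna := hn a ha1 hak
    have hnb := hn b hb1 hbk
    obtain ⟨⟨hca1, hcan⟩, hXa1, hXa2⟩ := hkey a ha1 hak
    obtain ⟨⟨hcb1, hcbn⟩, hXb1, hXb2⟩ := hkey b hb1 hbk
    have hGab := keyG n ha1 hab
    have hGa := cOffset_succ n ha1
    have hGb := cOffset_succ n hb1
    have hFN : s(CliqueVtx.x a, CliqueVtx.x b) ∈ cNew k := Or.inl ⟨a, b, ha1, hab, hbk, rfl⟩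
    -- standard memberships
    have Ma : ∀ o, o ≤ n a + 1 → cHost k n (CliqueVtx.u a o) := fun o h => M a o (by omega)
    have Mb : ∀ o, o ≤ n b + 1 → cHost k n (CliqueVtx.u b o) := fun o h => M b o (by omega)
    -- frequently used position facts
    have hord1 : ∀ o o', o < o' → o' ≤ n a + 1 →
        pos (CliqueVtx.u a o) < pos (CliqueVtx.u a o') :=
      fun o o' h h' => hU a o a o' (Ma o (by omega)) (Ma o' h') (by omega)
    have hord2 : ∀ o o', o < o' → o' ≤ n b + 1 →
        pos (CliqueVtx.u b o) < pos (CliqueVtx.u b o') :=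
      fun o o' h h' => hU b o b o' (Mb o (by omega)) (Mb o' h') (by omega)
    have hordle1 : ∀ o o', o ≤ o' → o' ≤ n a + 1 →
        pos (CliqueVtx.u a o) ≤ pos (CliqueVtx.u a o') :=
      fun o o' h h' => hUe a o a o' (Ma o (by omega)) (Ma o' h') (by omega)
    have hordle2 : ∀ o o', o ≤ o' → o' ≤ n b + 1 →
        pos (CliqueVtx.u b o) ≤ pos (CliqueVtx.u b o') :=
      fun o o' h h' => hUe b o b o' (Mb o (by omega)) (Mb o' h') (by omega)
    have hcross : ∀ o o', o ≤ n a + 1 → o' ≤ n b + 1 →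
        pos (CliqueVtx.u a o) < pos (CliqueVtx.u b o') :=
      fun o o' h h' => hU a o b o' (Ma o h) (Mb o' h') (by omega)
    -- x positions
    have hXaT : pos (CliqueVtx.x a) < pos (CliqueVtx.u a (n a + 1)) :=
      lt_of_lt_of_le hXa2 (hordle1 _ _ (by omega) le_rfl)
    have hXa0 : pos (CliqueVtx.u a 1) < pos (CliqueVtx.x a) :=
      lt_of_le_of_lt (hordle1 _ _ hca1 (by omega)) hXa1
    have hXbT : pos (CliqueVtx.x b) < pos (CliqueVtx.u b (n b + 1)) :=
      lt_of_lt_of_le hXb2 (hordle2 _ _ (by omega) le_rfl)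
    have hXb0 : pos (CliqueVtx.u b 1) < pos (CliqueVtx.x b) :=
      lt_of_le_of_lt (hordle2 _ _ hcb1 (by omega)) hXb1
    have hXaXb : pos (CliqueVtx.x a) < pos (CliqueVtx.x b) := by
      have := hcross (n a + 1) 1 le_rfl (by omega)
      omega
    cases hp : σ s(CliqueVtx.x a, CliqueVtx.x b) with
    | none =>
      -- clique edge on the dummy page crosses (u a 0, u (a+1) 0)
      have hpair : cHostPage k n EC none s(CliqueVtx.u a 0, CliqueVtx.u (a+1) 0) :=
        Or.inr (Or.inl ⟨a, ha1, hak, rfl⟩)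
      have h1 : pos (CliqueVtx.u a 0) < pos (CliqueVtx.x a) := by
        have := hord1 0 1 (by omega) (by omega)
        omega
      have h2 : pos (CliqueVtx.x a) < pos (CliqueVtx.u (a+1) 0) := by
        have h3 : pos (CliqueVtx.u a (n a + 1)) < pos (CliqueVtx.u (a+1) 0) :=
          hU a (n a + 1) (a+1) 0 (Ma _ le_rfl) (M (a+1) 0 (by omega)) (by omega)
        omega
      have h3 : pos (CliqueVtx.u (a+1) 0) < pos (CliqueVtx.x b) := by
        have h4 : pos (CliqueVtx.u (a+1) 0) ≤ pos (CliqueVtx.u b 0) :=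
          hUe (a+1) 0 b 0 (M (a+1) 0 (by omega)) (Mb 0 (by omega))
            (by have := cOffset_mono n (show a + 1 ≤ b by omega); omega)
        have h5 : pos (CliqueVtx.u b 0) < pos (CliqueVtx.u b 1) := hord2 0 1 (by omega) (by omega)
        omega
      exact absurd (mkCross pos (CliqueVtx.u a 0) (CliqueVtx.x a) (CliqueVtx.u (a+1) 0)
          (CliqueVtx.x b) rfl rfl h1 h2 h3)
        (hcr none _ _ (Or.inl hpair) (Or.inr ⟨hFN, hp⟩))
    | some e0 =>
      obtain ⟨γ, i, δ, j, hdec, hγ1, hγδ, hδk, hi1, hin, hj1, hjn⟩ := hEC e0.1 e0.2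
      -- a is one of the two colors of the page edge
      have hag : a = γ ∨ a = δ := by
        by_contra hcon
        push_neg at hcon
        have hmem : cHostPage k n EC (some e0) s(CliqueVtx.u a 1, CliqueVtx.u a (n a + 1)) :=
          Or.inr ⟨γ, i, δ, j, hdec, hγδ, Or.inl ⟨a, ha1, hak, hcon.1, hcon.2, rfl⟩⟩
        have h3 : pos (CliqueVtx.u a (n a + 1)) < pos (CliqueVtx.x b) := by
          have := hcross (n a + 1) 1 le_rfl (by omega)
          omega
        exact absurd (mkCross pos (CliqueVtx.u a 1) (CliqueVtx.x a) (CliqueVtx.u a (n a + 1))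
            (CliqueVtx.x b) rfl rfl hXa0 hXaT h3)
          (hcr (some e0) _ _ (Or.inl hmem) (Or.inr ⟨hFN, hp⟩))
      have hbg : b = γ ∨ b = δ := by
        by_contra hcon
        push_neg at hcon
        have hmem : cHostPage k n EC (some e0) s(CliqueVtx.u b 1, CliqueVtx.u b (n b + 1)) :=
          Or.inr ⟨γ, i, δ, j, hdec, hγδ, Or.inl ⟨b, hb1, hbk, hcon.1, hcon.2, rfl⟩⟩
        have h1 : pos (CliqueVtx.x a) < pos (CliqueVtx.u b 1) := by
          have := hcross (n a + 1) 1 le_rfl (by omega)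
          omega
        exact absurd (mkCross pos (CliqueVtx.x a) (CliqueVtx.u b 1) (CliqueVtx.x b)
            (CliqueVtx.u b (n b + 1)) rfl rfl h1 hXb0 hXbT)
          (hcr (some e0) _ _ (Or.inr ⟨hFN, hp⟩) (Or.inl hmem))
      have hgd : γ = a ∧ δ = b := by
        rcases hag with h | h <;> rcases hbg with h' | h' <;> omega
      rw [hgd.1] at hdec hin
      rw [hgd.2] at hdec hjn
      -- i = cF a
      have hia : i = cF a := by
        rcases Nat.lt_trichotomy i (cF a) with h | h | h
        · -- partial pair (u a (i+1), u a (n a + 1))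
          have hmem : cHostPage k n EC (some e0)
              s(CliqueVtx.u a (i + 1), CliqueVtx.u a (n a + 1)) :=
            Or.inr ⟨a, i, b, j, hdec, hab, Or.inr (Or.inr (Or.inl ⟨by omega, rfl⟩))⟩
          have h1 : pos (CliqueVtx.u a (i + 1)) < pos (CliqueVtx.x a) := by
            have := hordle1 (i+1) (cF a) (by omega) (by omega)
            omega
          have h3 : pos (CliqueVtx.u a (n a + 1)) < pos (CliqueVtx.x b) := by
            have := hcross (n a + 1) 1 le_rfl (by omega)
            omega
          exact absurd (mkCross pos (CliqueVtx.u a (i + 1)) (CliqueVtx.x a)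
              (CliqueVtx.u a (n a + 1)) (CliqueVtx.x b) rfl rfl h1 hXaT h3)
            (hcr (some e0) _ _ (Or.inl hmem) (Or.inr ⟨hFN, hp⟩))
        · exact h
        · -- partial pair (u a 1, u a i)
          have hmem : cHostPage k n EC (some e0) s(CliqueVtx.u a 1, CliqueVtx.u a i) :=
            Or.inr ⟨a, i, b, j, hdec, hab, Or.inr (Or.inl ⟨by omega, rfl⟩)⟩
          have h2 : pos (CliqueVtx.x a) < pos (CliqueVtx.u a i) := by
            have := hordle1 (cF a + 1) i (by omega) (by omega)
            omega
          have h3 : pos (CliqueVtx.u a i) < pos (CliqueVtx.x b) := by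
            have := hcross i 1 (by omega) (by omega)
            omega
          exact absurd (mkCross pos (CliqueVtx.u a 1) (CliqueVtx.x a) (CliqueVtx.u a i)
              (CliqueVtx.x b) rfl rfl hXa0 h2 h3)
            (hcr (some e0) _ _ (Or.inl hmem) (Or.inr ⟨hFN, hp⟩))
      -- j = cF b
      have hjb : j = cF b := by
        rcases Nat.lt_trichotomy j (cF b) with h | h | h
        · -- partial pair (u b (j+1), u b (n b + 1))
          have hmem : cHostPage k n EC (some e0)
              s(CliqueVtx.u b (j + 1), CliqueVtx.u b (n b + 1)) :=
            Or.inr ⟨a, i, b, j, hdec, hab, Or.inr (Or.inr (Or.inr (Or.inr (Or.inl ⟨by omega, rfl⟩))))⟩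
          have h1 : pos (CliqueVtx.x a) < pos (CliqueVtx.u b (j + 1)) := by
            have := hcross (n a + 1) (j+1) le_rfl (by omega)
            omega
          have h2 : pos (CliqueVtx.u b (j + 1)) < pos (CliqueVtx.x b) := by
            have := hordle2 (j+1) (cF b) (by omega) (by omega)
            omega
          exact absurd (mkCross pos (CliqueVtx.x a) (CliqueVtx.u b (j + 1)) (CliqueVtx.x b)
              (CliqueVtx.u b (n b + 1)) rfl rfl h1 h2 hXbT)
            (hcr (some e0) _ _ (Or.inr ⟨hFN, hp⟩) (Or.inl hmem))
        · exact h
        · -- partial pair (u b 1, u b j)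
          have hmem : cHostPage k n EC (some e0) s(CliqueVtx.u b 1, CliqueVtx.u b j) :=
            Or.inr ⟨a, i, b, j, hdec, hab, Or.inr (Or.inr (Or.inr (Or.inl ⟨by omega, rfl⟩)))⟩
          have h1 : pos (CliqueVtx.x a) < pos (CliqueVtx.u b 1) := by
            have := hcross (n a + 1) 1 le_rfl (by omega)
            omega
          have h3 : pos (CliqueVtx.x b) < pos (CliqueVtx.u b j) := by
            have := hordle2 (cF b + 1) j (by omega) (by omega)
            omega
          exact absurd (mkCross pos (CliqueVtx.x a) (CliqueVtx.u b 1) (CliqueVtx.x b)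
              (CliqueVtx.u b j) rfl rfl h1 hXb0 h3)
            (hcr (some e0) _ _ (Or.inr ⟨hFN, hp⟩) (Or.inl hmem))
      rw [← hia, ← hjb, ← hdec]
      exact e0.2
  exact ⟨cF, fun α h1 h2 => (hkey α h1 h2).1, hedge⟩

end Stmt6Fwd2
/-- For a graph `G_C` whose vertex set `{(α, i) | 1 ≤ α ≤ k, 1 ≤ i ≤ n α}`
is partitioned into `k` nonempty independent color classes (every edge joins two
distinct colors), the constructed Stack Layout Extension instance with
`ℓ = |E(G_C)| + 1` pages admits an extension iff `G_C` contains a colorful `k`-clique. -/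
theorem stmt6 (k : ℕ) (n : ℕ → ℕ) (hn : ∀ α, 1 ≤ α → α ≤ k → 1 ≤ n α)
    (EC : Set (Sym2 (ℕ × ℕ)))
    (hEC : ∀ e ∈ EC, ∃ α i β j, e = s((α, i), (β, j)) ∧
      1 ≤ α ∧ α < β ∧ β ≤ k ∧ 1 ≤ i ∧ i ≤ n α ∧ 1 ≤ j ∧ j ≤ n β) :
    (∃ (posG : CliqueVtx → ℕ) (σ : Sym2 CliqueVtx → Option {e : Sym2 (ℕ × ℕ) // e ∈ EC}),
      Set.InjOn posG {w | cHost k n w ∨ ∃ α, 1 ≤ α ∧ α ≤ k ∧ w = CliqueVtx.x α} ∧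
      (∀ y z, cHost k n y → cHost k n z → (cPos n y < cPos n z ↔ posG y < posG z)) ∧
      (∀ p e f, (cHostPage k n EC p e ∨ e ∈ cNew k ∧ σ e = p) →
        (cHostPage k n EC p f ∨ f ∈ cNew k ∧ σ f = p) → ¬ EdgesCross posG e f)) ↔
      ∃ c : ℕ → ℕ, (∀ α, 1 ≤ α → α ≤ k → 1 ≤ c α ∧ c α ≤ n α) ∧
        ∀ α β, 1 ≤ α → α < β → β ≤ k → s((α, c α), (β, c β)) ∈ EC := by

  constructor
  · rintro ⟨pos, σ, hinj, hord, hcr⟩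
    exact stmt6_fwd k n hn EC hEC pos σ hinj hord hcr
  · rintro ⟨c, hc1, hc2⟩
    refine ⟨posB n c, sigB k EC c hc2, ?_, ?_, ?_⟩
    · rintro w1 hw1 w2 hw2 heq
      cases w1 with
      | u b o =>
        cases w2 with
        | u b' o' =>
          have hv := host_val (mem_u hw1)
          have hv' := host_val (mem_u hw2)
          simp only [posB] at heq
          rcases Nat.lt_trichotomy b b' with h | rfl | h
          · exact absurd (valid_lt n hv h o') (by omega)
          · have : o = o' := by omega
            rw [this]
          · exact absurd (valid_lt n hv' h o) (by omega)
        | x a => simp only [posB] at heq; omega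
      | x a =>
        cases w2 with
        | u b' o' => simp only [posB] at heq; omega
        | x a' =>
          obtain ⟨ha1, hak⟩ := mem_x hw1
          obtain ⟨ha1', hak'⟩ := mem_x hw2
          have hca := hc1 a ha1 hak
          have hca' := hc1 a' ha1' hak'
          simp only [posB] at heq
          rcases Nat.lt_trichotomy a a' with h | rfl | h
          · exact absurd (valid_lt n (b := a) (o := c a) (Or.inr ⟨ha1, by omega⟩) h (c a')) (by omega)
          · rfl
          · exact absurd (valid_lt n (b := a') (o := c a') (Or.inr ⟨ha1', by omega⟩) h (c a)) (by omega)
    · intro y z hy hz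
      cases y with
      | x a => exact absurd hy (by simp [cHost])
      | u b o =>
        cases z with
        | x a => exact absurd hz (by simp [cHost])
        | u b' o' =>
          simp only [cPos, posB]
          omega
    · intro p e f he hf
      match p with
      | none =>

        rcases shape_d he with
          ⟨a, ha1, hak, rfl⟩ |
          ⟨a, ha1, hak, rfl⟩ |
          ⟨a, ha1, hak, rfl⟩ |
          rfl |
          ⟨a, ha1, hak, rfl⟩ |
          ⟨a, ha1, hak, rfl⟩ <;>
        rcases shape_d hf with
            ⟨b, hb1, hbk, rfl⟩ |
            ⟨b, hb1, hbk, rfl⟩ |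
            ⟨b, hb1, hbk, rfl⟩ |
            rfl |
            ⟨b, hb1, hbk, rfl⟩ |
            ⟨b, hb1, hbk, rfl⟩

        · apply noncross_cert
          have Z := cOffset_zero n
          have S1 := cOffset_succ n ha1
          have B1 := bV_posB n c ha1
          have Ra := rel2 n c a (k+1) ha1 (by omega)
          have S2 := cOffset_succ n hb1
          have B2 := bV_posB n c hb1
          have Rb := rel2 n c b (k+1) hb1 (by omega)
          have Rab := rel2 n c a b ha1 hb1
          simp only [posB] at B1 B2 ⊢
          omega

        · apply noncross_cert
          have Z := cOffset_zero n
          have S1 := cOffset_succ n ha1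
          have B1 := bV_posB n c ha1
          have Ra := rel2 n c a (k+1) ha1 (by omega)
          have S2 := cOffset_succ n hb1
          have B2 := bV_posB n c hb1
          have Rb := rel2 n c b (k+1) hb1 (by omega)
          have Rab := rel2 n c a b ha1 hb1
          simp only [posB] at B1 B2 ⊢
          omega

        · apply noncross_cert
          have Z := cOffset_zero n
          have S1 := cOffset_succ n ha1
          have B1 := bV_posB n c ha1
          have Ra := rel2 n c a (k+1) ha1 (by omega)
          have S2 := cOffset_succ n hb1
          have B2 := bV_posB n c hb1
          have Rb := rel2 n c b (k+1) hb1 (by omega)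
          have Cb := hc1 b hb1 hbk
          have Nb := hn b hb1 hbk
          have Rab := rel2 n c a b ha1 hb1
          simp only [posB] at B1 B2 ⊢
          omega

        · apply noncross_cert
          have Z := cOffset_zero n
          have S1 := cOffset_succ n ha1
          have B1 := bV_posB n c ha1
          have Ra := rel2 n c a (k+1) ha1 (by omega)
          simp only [posB] at B1 ⊢
          omega

        · apply noncross_cert
          have Z := cOffset_zero n
          have S1 := cOffset_succ n ha1
          have B1 := bV_posB n c ha1
          have Ra := rel2 n c a (k+1) ha1 (by omega)
          have S2 := cOffset_succ n hb1
          have B2 := bV_posB n c hb1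
          have Rb := rel2 n c b (k+1) hb1 (by omega)
          have Cb := hc1 b hb1 hbk
          have Nb := hn b hb1 hbk
          have Rab := rel2 n c a b ha1 hb1
          simp only [posB] at B1 B2 ⊢
          omega

        · apply noncross_cert
          have Z := cOffset_zero n
          have S1 := cOffset_succ n ha1
          have B1 := bV_posB n c ha1
          have Ra := rel2 n c a (k+1) ha1 (by omega)
          have S2 := cOffset_succ n hb1
          have B2 := bV_posB n c hb1
          have Rb := rel2 n c b (k+1) hb1 (by omega)
          have Cb := hc1 b hb1 hbk
          have Nb := hn b hb1 hbk
          have Rab := rel2 n c a b ha1 hb1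
          simp only [posB] at B1 B2 ⊢
          omega

        · apply noncross_cert
          have Z := cOffset_zero n
          have S1 := cOffset_succ n ha1
          have B1 := bV_posB n c ha1
          have Ra := rel2 n c a (k+1) ha1 (by omega)
          have S2 := cOffset_succ n hb1
          have B2 := bV_posB n c hb1
          have Rb := rel2 n c b (k+1) hb1 (by omega)
          have Rab := rel2 n c a b ha1 hb1
          simp only [posB] at B1 B2 ⊢
          omega

        · apply noncross_cert
          have Z := cOffset_zero n
          have S1 := cOffset_succ n ha1
          have B1 := bV_posB n c ha1
          have Ra := rel2 n c a (k+1) ha1 (by omega)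
          have S2 := cOffset_succ n hb1
          have B2 := bV_posB n c hb1
          have Rb := rel2 n c b (k+1) hb1 (by omega)
          have Rab := rel2 n c a b ha1 hb1
          simp only [posB] at B1 B2 ⊢
          omega

        · apply noncross_cert
          have Z := cOffset_zero n
          have S1 := cOffset_succ n ha1
          have B1 := bV_posB n c ha1
          have Ra := rel2 n c a (k+1) ha1 (by omega)
          have S2 := cOffset_succ n hb1
          have B2 := bV_posB n c hb1
          have Rb := rel2 n c b (k+1) hb1 (by omega)
          have Cb := hc1 b hb1 hbk
          have Nb := hn b hb1 hbk
          have Rab := rel2 n c a b ha1 hb1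
          simp only [posB] at B1 B2 ⊢
          omega

        · apply noncross_cert
          have Z := cOffset_zero n
          have S1 := cOffset_succ n ha1
          have B1 := bV_posB n c ha1
          have Ra := rel2 n c a (k+1) ha1 (by omega)
          simp only [posB] at B1 ⊢
          omega

        · apply noncross_cert
          have Z := cOffset_zero n
          have S1 := cOffset_succ n ha1
          have B1 := bV_posB n c ha1
          have Ra := rel2 n c a (k+1) ha1 (by omega)
          have S2 := cOffset_succ n hb1
          have B2 := bV_posB n c hb1
          have Rb := rel2 n c b (k+1) hb1 (by omega)
          have Cb := hc1 b hb1 hbk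
          have Nb := hn b hb1 hbk
          have Rab := rel2 n c a b ha1 hb1
          simp only [posB] at B1 B2 ⊢
          omega

        · apply noncross_cert
          have Z := cOffset_zero n
          have S1 := cOffset_succ n ha1
          have B1 := bV_posB n c ha1
          have Ra := rel2 n c a (k+1) ha1 (by omega)
          have S2 := cOffset_succ n hb1
          have B2 := bV_posB n c hb1
          have Rb := rel2 n c b (k+1) hb1 (by omega)
          have Cb := hc1 b hb1 hbk
          have Nb := hn b hb1 hbk
          have Rab := rel2 n c a b ha1 hb1
          simp only [posB] at B1 B2 ⊢
          omega

        · apply noncross_cert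
          have Z := cOffset_zero n
          have S1 := cOffset_succ n ha1
          have B1 := bV_posB n c ha1
          have Ra := rel2 n c a (k+1) ha1 (by omega)
          have Ca := hc1 a ha1 hak
          have Na := hn a ha1 hak
          have S2 := cOffset_succ n hb1
          have B2 := bV_posB n c hb1
          have Rb := rel2 n c b (k+1) hb1 (by omega)
          have Rab := rel2 n c a b ha1 hb1
          simp only [posB] at B1 B2 ⊢
          omega

        · apply noncross_cert
          have Z := cOffset_zero n
          have S1 := cOffset_succ n ha1
          have B1 := bV_posB n c ha1
          have Ra := rel2 n c a (k+1) ha1 (by omega)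
          have Ca := hc1 a ha1 hak
          have Na := hn a ha1 hak
          have S2 := cOffset_succ n hb1
          have B2 := bV_posB n c hb1
          have Rb := rel2 n c b (k+1) hb1 (by omega)
          have Rab := rel2 n c a b ha1 hb1
          simp only [posB] at B1 B2 ⊢
          omega

        · apply noncross_cert
          have Z := cOffset_zero n
          have S1 := cOffset_succ n ha1
          have B1 := bV_posB n c ha1
          have Ra := rel2 n c a (k+1) ha1 (by omega)
          have Ca := hc1 a ha1 hak
          have Na := hn a ha1 hak
          have S2 := cOffset_succ n hb1
          have B2 := bV_posB n c hb1
          have Rb := rel2 n c b (k+1) hb1 (by omega)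
          have Cb := hc1 b hb1 hbk
          have Nb := hn b hb1 hbk
          have Rab := rel2 n c a b ha1 hb1
          simp only [posB] at B1 B2 ⊢
          omega

        · apply noncross_cert
          have Z := cOffset_zero n
          have S1 := cOffset_succ n ha1
          have B1 := bV_posB n c ha1
          have Ra := rel2 n c a (k+1) ha1 (by omega)
          have Ca := hc1 a ha1 hak
          have Na := hn a ha1 hak
          simp only [posB] at B1 ⊢
          omega

        · apply noncross_cert
          have Z := cOffset_zero n
          have S1 := cOffset_succ n ha1
          have B1 := bV_posB n c ha1
          have Ra := rel2 n c a (k+1) ha1 (by omega)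
          have Ca := hc1 a ha1 hak
          have Na := hn a ha1 hak
          have S2 := cOffset_succ n hb1
          have B2 := bV_posB n c hb1
          have Rb := rel2 n c b (k+1) hb1 (by omega)
          have Cb := hc1 b hb1 hbk
          have Nb := hn b hb1 hbk
          have Rab := rel2 n c a b ha1 hb1
          simp only [posB] at B1 B2 ⊢
          omega

        · apply noncross_cert
          have Z := cOffset_zero n
          have S1 := cOffset_succ n ha1
          have B1 := bV_posB n c ha1
          have Ra := rel2 n c a (k+1) ha1 (by omega)
          have Ca := hc1 a ha1 hak
          have Na := hn a ha1 hak
          have S2 := cOffset_succ n hb1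
          have B2 := bV_posB n c hb1
          have Rb := rel2 n c b (k+1) hb1 (by omega)
          have Cb := hc1 b hb1 hbk
          have Nb := hn b hb1 hbk
          have Rab := rel2 n c a b ha1 hb1
          simp only [posB] at B1 B2 ⊢
          omega

        · apply noncross_cert
          have Z := cOffset_zero n
          have S2 := cOffset_succ n hb1
          have B2 := bV_posB n c hb1
          have Rb := rel2 n c b (k+1) hb1 (by omega)
          simp only [posB] at B2 ⊢
          omega

        · apply noncross_cert
          have Z := cOffset_zero n
          have S2 := cOffset_succ n hb1
          have B2 := bV_posB n c hb1
          have Rb := rel2 n c b (k+1) hb1 (by omega)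
          simp only [posB] at B2 ⊢
          omega

        · apply noncross_cert
          have Z := cOffset_zero n
          have S2 := cOffset_succ n hb1
          have B2 := bV_posB n c hb1
          have Rb := rel2 n c b (k+1) hb1 (by omega)
          have Cb := hc1 b hb1 hbk
          have Nb := hn b hb1 hbk
          simp only [posB] at B2 ⊢
          omega

        · apply noncross_cert
          have Z := cOffset_zero n
          simp only [posB]
          omega

        · apply noncross_cert
          have Z := cOffset_zero n
          have S2 := cOffset_succ n hb1
          have B2 := bV_posB n c hb1
          have Rb := rel2 n c b (k+1) hb1 (by omega)
          have Cb := hc1 b hb1 hbk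
          have Nb := hn b hb1 hbk
          simp only [posB] at B2 ⊢
          omega

        · apply noncross_cert
          have Z := cOffset_zero n
          have S2 := cOffset_succ n hb1
          have B2 := bV_posB n c hb1
          have Rb := rel2 n c b (k+1) hb1 (by omega)
          have Cb := hc1 b hb1 hbk
          have Nb := hn b hb1 hbk
          simp only [posB] at B2 ⊢
          omega

        · apply noncross_cert
          have Z := cOffset_zero n
          have S1 := cOffset_succ n ha1
          have B1 := bV_posB n c ha1
          have Ra := rel2 n c a (k+1) ha1 (by omega)
          have Ca := hc1 a ha1 hak
          have Na := hn a ha1 hak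
          have S2 := cOffset_succ n hb1
          have B2 := bV_posB n c hb1
          have Rb := rel2 n c b (k+1) hb1 (by omega)
          have Rab := rel2 n c a b ha1 hb1
          simp only [posB] at B1 B2 ⊢
          omega

        · apply noncross_cert
          have Z := cOffset_zero n
          have S1 := cOffset_succ n ha1
          have B1 := bV_posB n c ha1
          have Ra := rel2 n c a (k+1) ha1 (by omega)
          have Ca := hc1 a ha1 hak
          have Na := hn a ha1 hak
          have S2 := cOffset_succ n hb1
          have B2 := bV_posB n c hb1
          have Rb := rel2 n c b (k+1) hb1 (by omega)
          have Rab := rel2 n c a b ha1 hb1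
          simp only [posB] at B1 B2 ⊢
          omega

        · apply noncross_cert
          have Z := cOffset_zero n
          have S1 := cOffset_succ n ha1
          have B1 := bV_posB n c ha1
          have Ra := rel2 n c a (k+1) ha1 (by omega)
          have Ca := hc1 a ha1 hak
          have Na := hn a ha1 hak
          have S2 := cOffset_succ n hb1
          have B2 := bV_posB n c hb1
          have Rb := rel2 n c b (k+1) hb1 (by omega)
          have Cb := hc1 b hb1 hbk
          have Nb := hn b hb1 hbk
          have Rab := rel2 n c a b ha1 hb1
          simp only [posB] at B1 B2 ⊢
          omega

        · apply noncross_cert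
          have Z := cOffset_zero n
          have S1 := cOffset_succ n ha1
          have B1 := bV_posB n c ha1
          have Ra := rel2 n c a (k+1) ha1 (by omega)
          have Ca := hc1 a ha1 hak
          have Na := hn a ha1 hak
          simp only [posB] at B1 ⊢
          omega

        · apply noncross_cert
          have Z := cOffset_zero n
          have S1 := cOffset_succ n ha1
          have B1 := bV_posB n c ha1
          have Ra := rel2 n c a (k+1) ha1 (by omega)
          have Ca := hc1 a ha1 hak
          have Na := hn a ha1 hak
          have S2 := cOffset_succ n hb1
          have B2 := bV_posB n c hb1
          have Rb := rel2 n c b (k+1) hb1 (by omega)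
          have Cb := hc1 b hb1 hbk
          have Nb := hn b hb1 hbk
          have Rab := rel2 n c a b ha1 hb1
          simp only [posB] at B1 B2 ⊢
          omega

        · apply noncross_cert
          have Z := cOffset_zero n
          have S1 := cOffset_succ n ha1
          have B1 := bV_posB n c ha1
          have Ra := rel2 n c a (k+1) ha1 (by omega)
          have Ca := hc1 a ha1 hak
          have Na := hn a ha1 hak
          have S2 := cOffset_succ n hb1
          have B2 := bV_posB n c hb1
          have Rb := rel2 n c b (k+1) hb1 (by omega)
          have Cb := hc1 b hb1 hbk
          have Nb := hn b hb1 hbk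
          have Rab := rel2 n c a b ha1 hb1
          simp only [posB] at B1 B2 ⊢
          omega

        · apply noncross_cert
          have Z := cOffset_zero n
          have S1 := cOffset_succ n ha1
          have B1 := bV_posB n c ha1
          have Ra := rel2 n c a (k+1) ha1 (by omega)
          have Ca := hc1 a ha1 hak
          have Na := hn a ha1 hak
          have S2 := cOffset_succ n hb1
          have B2 := bV_posB n c hb1
          have Rb := rel2 n c b (k+1) hb1 (by omega)
          have Rab := rel2 n c a b ha1 hb1
          simp only [posB] at B1 B2 ⊢
          omega

        · apply noncross_cert
          have Z := cOffset_zero n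
          have S1 := cOffset_succ n ha1
          have B1 := bV_posB n c ha1
          have Ra := rel2 n c a (k+1) ha1 (by omega)
          have Ca := hc1 a ha1 hak
          have Na := hn a ha1 hak
          have S2 := cOffset_succ n hb1
          have B2 := bV_posB n c hb1
          have Rb := rel2 n c b (k+1) hb1 (by omega)
          have Rab := rel2 n c a b ha1 hb1
          simp only [posB] at B1 B2 ⊢
          omega

        · apply noncross_cert
          have Z := cOffset_zero n
          have S1 := cOffset_succ n ha1
          have B1 := bV_posB n c ha1
          have Ra := rel2 n c a (k+1) ha1 (by omega)
          have Ca := hc1 a ha1 hak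
          have Na := hn a ha1 hak
          have S2 := cOffset_succ n hb1
          have B2 := bV_posB n c hb1
          have Rb := rel2 n c b (k+1) hb1 (by omega)
          have Cb := hc1 b hb1 hbk
          have Nb := hn b hb1 hbk
          have Rab := rel2 n c a b ha1 hb1
          simp only [posB] at B1 B2 ⊢
          omega

        · apply noncross_cert
          have Z := cOffset_zero n
          have S1 := cOffset_succ n ha1
          have B1 := bV_posB n c ha1
          have Ra := rel2 n c a (k+1) ha1 (by omega)
          have Ca := hc1 a ha1 hak
          have Na := hn a ha1 hak
          simp only [posB] at B1 ⊢
          omega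

        · apply noncross_cert
          have Z := cOffset_zero n
          have S1 := cOffset_succ n ha1
          have B1 := bV_posB n c ha1
          have Ra := rel2 n c a (k+1) ha1 (by omega)
          have Ca := hc1 a ha1 hak
          have Na := hn a ha1 hak
          have S2 := cOffset_succ n hb1
          have B2 := bV_posB n c hb1
          have Rb := rel2 n c b (k+1) hb1 (by omega)
          have Cb := hc1 b hb1 hbk
          have Nb := hn b hb1 hbk
          have Rab := rel2 n c a b ha1 hb1
          simp only [posB] at B1 B2 ⊢
          omega

        · apply noncross_cert
          have Z := cOffset_zero n
          have S1 := cOffset_succ n ha1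
          have B1 := bV_posB n c ha1
          have Ra := rel2 n c a (k+1) ha1 (by omega)
          have Ca := hc1 a ha1 hak
          have Na := hn a ha1 hak
          have S2 := cOffset_succ n hb1
          have B2 := bV_posB n c hb1
          have Rb := rel2 n c b (k+1) hb1 (by omega)
          have Cb := hc1 b hb1 hbk
          have Nb := hn b hb1 hbk
          have Rab := rel2 n c a b ha1 hb1
          simp only [posB] at B1 B2 ⊢
          omega

      | some e0 =>
        obtain ⟨γ, i, δ, j, hdec, hγ1, hγδ, hδk, hi1, hin, hj1, hjn⟩ := hEC e0.1 e0.2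
        rcases shape_s hdec hγ1 hγδ hδk hi1 hin hj1 hjn he with
          ⟨a, ha1, hak, rfl⟩ |
          ⟨a, pp, qq, ha1, hak, hp1, hpq, hqn, hside, rfl⟩ |
          rfl | rfl | ⟨rfl, hic, hjc⟩ <;>
        rcases shape_s hdec hγ1 hγδ hδk hi1 hin hj1 hjn hf with
            ⟨b, hb1, hbk, rfl⟩ |
            ⟨b, pp', qq', hb1, hbk, hp1', hpq', hqn', hside', rfl⟩ |
            rfl | rfl | ⟨rfl, hic', hjc'⟩

        · apply noncross_cert
          have Z := cOffset_zero n
          have Sg := cOffset_succ n hγ1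
          have Sd := cOffset_succ n (show 1 ≤ δ by omega)
          have Rgd := rel2 n c γ δ hγ1 (by omega)
          have Cg := hc1 γ hγ1 (by omega)
          have Cd := hc1 δ (by omega) hδk
          have S1 := cOffset_succ n ha1
          have B1 := bV_posB n c ha1
          have Rag := rel2 n c a γ ha1 hγ1
          have Rad := rel2 n c a δ ha1 (by omega)
          have S2 := cOffset_succ n hb1
          have B2 := bV_posB n c hb1
          have Rbg := rel2 n c b γ hb1 hγ1
          have Rbd := rel2 n c b δ hb1 (by omega)
          have Rab := rel2 n c a b ha1 hb1
          simp only [posB] at B1 B2 ⊢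
          omega

        · apply noncross_cert
          have Z := cOffset_zero n
          have Sg := cOffset_succ n hγ1
          have Sd := cOffset_succ n (show 1 ≤ δ by omega)
          have Rgd := rel2 n c γ δ hγ1 (by omega)
          have Cg := hc1 γ hγ1 (by omega)
          have Cd := hc1 δ (by omega) hδk
          have S1 := cOffset_succ n ha1
          have B1 := bV_posB n c ha1
          have Rag := rel2 n c a γ ha1 hγ1
          have Rad := rel2 n c a δ ha1 (by omega)
          have S2 := cOffset_succ n hb1
          have B2 := bV_posB n c hb1
          have Rbg := rel2 n c b γ hb1 hγ1
          have Rbd := rel2 n c b δ hb1 (by omega)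
          have Cb := hc1 b hb1 hbk
          have Nb := hn b hb1 hbk
          have Rab := rel2 n c a b ha1 hb1
          simp only [posB] at B1 B2 ⊢
          omega

        · apply noncross_cert
          have Z := cOffset_zero n
          have Sg := cOffset_succ n hγ1
          have Sd := cOffset_succ n (show 1 ≤ δ by omega)
          have Rgd := rel2 n c γ δ hγ1 (by omega)
          have Cg := hc1 γ hγ1 (by omega)
          have Cd := hc1 δ (by omega) hδk
          have S1 := cOffset_succ n ha1
          have B1 := bV_posB n c ha1
          have Rag := rel2 n c a γ ha1 hγ1
          have Rad := rel2 n c a δ ha1 (by omega)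
          simp only [posB] at B1 ⊢
          omega

        · apply noncross_cert
          have Z := cOffset_zero n
          have Sg := cOffset_succ n hγ1
          have Sd := cOffset_succ n (show 1 ≤ δ by omega)
          have Rgd := rel2 n c γ δ hγ1 (by omega)
          have Cg := hc1 γ hγ1 (by omega)
          have Cd := hc1 δ (by omega) hδk
          have S1 := cOffset_succ n ha1
          have B1 := bV_posB n c ha1
          have Rag := rel2 n c a γ ha1 hγ1
          have Rad := rel2 n c a δ ha1 (by omega)
          simp only [posB] at B1 ⊢
          omega

        · apply noncross_cert
          have Z := cOffset_zero n
          have Sg := cOffset_succ n hγ1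
          have Sd := cOffset_succ n (show 1 ≤ δ by omega)
          have Rgd := rel2 n c γ δ hγ1 (by omega)
          have Cg := hc1 γ hγ1 (by omega)
          have Cd := hc1 δ (by omega) hδk
          have S1 := cOffset_succ n ha1
          have B1 := bV_posB n c ha1
          have Rag := rel2 n c a γ ha1 hγ1
          have Rad := rel2 n c a δ ha1 (by omega)
          simp only [posB] at B1 ⊢
          omega

        · apply noncross_cert
          have Z := cOffset_zero n
          have Sg := cOffset_succ n hγ1
          have Sd := cOffset_succ n (show 1 ≤ δ by omega)
          have Rgd := rel2 n c γ δ hγ1 (by omega)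
          have Cg := hc1 γ hγ1 (by omega)
          have Cd := hc1 δ (by omega) hδk
          have S1 := cOffset_succ n ha1
          have B1 := bV_posB n c ha1
          have Rag := rel2 n c a γ ha1 hγ1
          have Rad := rel2 n c a δ ha1 (by omega)
          have Ca := hc1 a ha1 hak
          have Na := hn a ha1 hak
          have S2 := cOffset_succ n hb1
          have B2 := bV_posB n c hb1
          have Rbg := rel2 n c b γ hb1 hγ1
          have Rbd := rel2 n c b δ hb1 (by omega)
          have Rab := rel2 n c a b ha1 hb1
          simp only [posB] at B1 B2 ⊢
          omega

        · apply noncross_cert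
          have Z := cOffset_zero n
          have Sg := cOffset_succ n hγ1
          have Sd := cOffset_succ n (show 1 ≤ δ by omega)
          have Rgd := rel2 n c γ δ hγ1 (by omega)
          have Cg := hc1 γ hγ1 (by omega)
          have Cd := hc1 δ (by omega) hδk
          have S1 := cOffset_succ n ha1
          have B1 := bV_posB n c ha1
          have Rag := rel2 n c a γ ha1 hγ1
          have Rad := rel2 n c a δ ha1 (by omega)
          have Ca := hc1 a ha1 hak
          have Na := hn a ha1 hak
          have S2 := cOffset_succ n hb1
          have B2 := bV_posB n c hb1
          have Rbg := rel2 n c b γ hb1 hγ1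
          have Rbd := rel2 n c b δ hb1 (by omega)
          have Cb := hc1 b hb1 hbk
          have Nb := hn b hb1 hbk
          have Rab := rel2 n c a b ha1 hb1
          simp only [posB] at B1 B2 ⊢
          omega

        · apply noncross_cert
          have Z := cOffset_zero n
          have Sg := cOffset_succ n hγ1
          have Sd := cOffset_succ n (show 1 ≤ δ by omega)
          have Rgd := rel2 n c γ δ hγ1 (by omega)
          have Cg := hc1 γ hγ1 (by omega)
          have Cd := hc1 δ (by omega) hδk
          have S1 := cOffset_succ n ha1
          have B1 := bV_posB n c ha1
          have Rag := rel2 n c a γ ha1 hγ1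
          have Rad := rel2 n c a δ ha1 (by omega)
          have Ca := hc1 a ha1 hak
          have Na := hn a ha1 hak
          simp only [posB] at B1 ⊢
          omega

        · apply noncross_cert
          have Z := cOffset_zero n
          have Sg := cOffset_succ n hγ1
          have Sd := cOffset_succ n (show 1 ≤ δ by omega)
          have Rgd := rel2 n c γ δ hγ1 (by omega)
          have Cg := hc1 γ hγ1 (by omega)
          have Cd := hc1 δ (by omega) hδk
          have S1 := cOffset_succ n ha1
          have B1 := bV_posB n c ha1
          have Rag := rel2 n c a γ ha1 hγ1
          have Rad := rel2 n c a δ ha1 (by omega)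
          have Ca := hc1 a ha1 hak
          have Na := hn a ha1 hak
          simp only [posB] at B1 ⊢
          omega

        · apply noncross_cert
          have Z := cOffset_zero n
          have Sg := cOffset_succ n hγ1
          have Sd := cOffset_succ n (show 1 ≤ δ by omega)
          have Rgd := rel2 n c γ δ hγ1 (by omega)
          have Cg := hc1 γ hγ1 (by omega)
          have Cd := hc1 δ (by omega) hδk
          have S1 := cOffset_succ n ha1
          have B1 := bV_posB n c ha1
          have Rag := rel2 n c a γ ha1 hγ1
          have Rad := rel2 n c a δ ha1 (by omega)
          have Ca := hc1 a ha1 hak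
          have Na := hn a ha1 hak
          simp only [posB] at B1 ⊢
          omega

        · apply noncross_cert
          have Z := cOffset_zero n
          have Sg := cOffset_succ n hγ1
          have Sd := cOffset_succ n (show 1 ≤ δ by omega)
          have Rgd := rel2 n c γ δ hγ1 (by omega)
          have Cg := hc1 γ hγ1 (by omega)
          have Cd := hc1 δ (by omega) hδk
          have S2 := cOffset_succ n hb1
          have B2 := bV_posB n c hb1
          have Rbg := rel2 n c b γ hb1 hγ1
          have Rbd := rel2 n c b δ hb1 (by omega)
          simp only [posB] at B2 ⊢
          omega

        · apply noncross_cert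
          have Z := cOffset_zero n
          have Sg := cOffset_succ n hγ1
          have Sd := cOffset_succ n (show 1 ≤ δ by omega)
          have Rgd := rel2 n c γ δ hγ1 (by omega)
          have Cg := hc1 γ hγ1 (by omega)
          have Cd := hc1 δ (by omega) hδk
          have S2 := cOffset_succ n hb1
          have B2 := bV_posB n c hb1
          have Rbg := rel2 n c b γ hb1 hγ1
          have Rbd := rel2 n c b δ hb1 (by omega)
          have Cb := hc1 b hb1 hbk
          have Nb := hn b hb1 hbk
          simp only [posB] at B2 ⊢
          omega

        · apply noncross_cert
          have Z := cOffset_zero n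
          have Sg := cOffset_succ n hγ1
          have Sd := cOffset_succ n (show 1 ≤ δ by omega)
          have Rgd := rel2 n c γ δ hγ1 (by omega)
          have Cg := hc1 γ hγ1 (by omega)
          have Cd := hc1 δ (by omega) hδk
          simp only [posB]
          omega

        · apply noncross_cert
          have Z := cOffset_zero n
          have Sg := cOffset_succ n hγ1
          have Sd := cOffset_succ n (show 1 ≤ δ by omega)
          have Rgd := rel2 n c γ δ hγ1 (by omega)
          have Cg := hc1 γ hγ1 (by omega)
          have Cd := hc1 δ (by omega) hδk
          simp only [posB]
          omega

        · apply noncross_cert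
          have Z := cOffset_zero n
          have Sg := cOffset_succ n hγ1
          have Sd := cOffset_succ n (show 1 ≤ δ by omega)
          have Rgd := rel2 n c γ δ hγ1 (by omega)
          have Cg := hc1 γ hγ1 (by omega)
          have Cd := hc1 δ (by omega) hδk
          simp only [posB]
          omega

        · apply noncross_cert
          have Z := cOffset_zero n
          have Sg := cOffset_succ n hγ1
          have Sd := cOffset_succ n (show 1 ≤ δ by omega)
          have Rgd := rel2 n c γ δ hγ1 (by omega)
          have Cg := hc1 γ hγ1 (by omega)
          have Cd := hc1 δ (by omega) hδk
          have S2 := cOffset_succ n hb1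
          have B2 := bV_posB n c hb1
          have Rbg := rel2 n c b γ hb1 hγ1
          have Rbd := rel2 n c b δ hb1 (by omega)
          simp only [posB] at B2 ⊢
          omega

        · apply noncross_cert
          have Z := cOffset_zero n
          have Sg := cOffset_succ n hγ1
          have Sd := cOffset_succ n (show 1 ≤ δ by omega)
          have Rgd := rel2 n c γ δ hγ1 (by omega)
          have Cg := hc1 γ hγ1 (by omega)
          have Cd := hc1 δ (by omega) hδk
          have S2 := cOffset_succ n hb1
          have B2 := bV_posB n c hb1
          have Rbg := rel2 n c b γ hb1 hγ1
          have Rbd := rel2 n c b δ hb1 (by omega)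
          have Cb := hc1 b hb1 hbk
          have Nb := hn b hb1 hbk
          simp only [posB] at B2 ⊢
          omega

        · apply noncross_cert
          have Z := cOffset_zero n
          have Sg := cOffset_succ n hγ1
          have Sd := cOffset_succ n (show 1 ≤ δ by omega)
          have Rgd := rel2 n c γ δ hγ1 (by omega)
          have Cg := hc1 γ hγ1 (by omega)
          have Cd := hc1 δ (by omega) hδk
          simp only [posB]
          omega

        · apply noncross_cert
          have Z := cOffset_zero n
          have Sg := cOffset_succ n hγ1
          have Sd := cOffset_succ n (show 1 ≤ δ by omega)
          have Rgd := rel2 n c γ δ hγ1 (by omega)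
          have Cg := hc1 γ hγ1 (by omega)
          have Cd := hc1 δ (by omega) hδk
          simp only [posB]
          omega

        · apply noncross_cert
          have Z := cOffset_zero n
          have Sg := cOffset_succ n hγ1
          have Sd := cOffset_succ n (show 1 ≤ δ by omega)
          have Rgd := rel2 n c γ δ hγ1 (by omega)
          have Cg := hc1 γ hγ1 (by omega)
          have Cd := hc1 δ (by omega) hδk
          simp only [posB]
          omega

        · apply noncross_cert
          have Z := cOffset_zero n
          have Sg := cOffset_succ n hγ1
          have Sd := cOffset_succ n (show 1 ≤ δ by omega)
          have Rgd := rel2 n c γ δ hγ1 (by omega)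
          have Cg := hc1 γ hγ1 (by omega)
          have Cd := hc1 δ (by omega) hδk
          have S2 := cOffset_succ n hb1
          have B2 := bV_posB n c hb1
          have Rbg := rel2 n c b γ hb1 hγ1
          have Rbd := rel2 n c b δ hb1 (by omega)
          simp only [posB] at B2 ⊢
          omega

        · apply noncross_cert
          have Z := cOffset_zero n
          have Sg := cOffset_succ n hγ1
          have Sd := cOffset_succ n (show 1 ≤ δ by omega)
          have Rgd := rel2 n c γ δ hγ1 (by omega)
          have Cg := hc1 γ hγ1 (by omega)
          have Cd := hc1 δ (by omega) hδk
          have S2 := cOffset_succ n hb1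
          have B2 := bV_posB n c hb1
          have Rbg := rel2 n c b γ hb1 hγ1
          have Rbd := rel2 n c b δ hb1 (by omega)
          have Cb := hc1 b hb1 hbk
          have Nb := hn b hb1 hbk
          simp only [posB] at B2 ⊢
          omega

        · apply noncross_cert
          have Z := cOffset_zero n
          have Sg := cOffset_succ n hγ1
          have Sd := cOffset_succ n (show 1 ≤ δ by omega)
          have Rgd := rel2 n c γ δ hγ1 (by omega)
          have Cg := hc1 γ hγ1 (by omega)
          have Cd := hc1 δ (by omega) hδk
          simp only [posB]
          omega

        · apply noncross_cert
          have Z := cOffset_zero n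
          have Sg := cOffset_succ n hγ1
          have Sd := cOffset_succ n (show 1 ≤ δ by omega)
          have Rgd := rel2 n c γ δ hγ1 (by omega)
          have Cg := hc1 γ hγ1 (by omega)
          have Cd := hc1 δ (by omega) hδk
          simp only [posB]
          omega

        · apply noncross_cert
          have Z := cOffset_zero n
          have Sg := cOffset_succ n hγ1
          have Sd := cOffset_succ n (show 1 ≤ δ by omega)
          have Rgd := rel2 n c γ δ hγ1 (by omega)
          have Cg := hc1 γ hγ1 (by omega)
          have Cd := hc1 δ (by omega) hδk
          simp only [posB]
          omega
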